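/- arXiv:2205.14185 — 2 statements merged into one kernel-verified Lean document; each statement's English description precedes it below -/
import Mathlib

section
/- For every mould B ∈ ARI and every r ≥ 2, the swap of the Fay operator satisfies (swap(ℱ(B)))(v_1,…,v_r) = (swap B)(v_1,…,v_r) + Σ_{j=0}^{r−1} (swap B)(v_1−v_r, …, v_j−v_r, −v_r, v_{j+1}−v_r, …, v_{r−1}−v_r); in shuffle notation, swap(ℱ(B)) = swap B + (swap B)(sh((−v_r),(v_1−v_r,…,v_{r−1}−v_r))). (The identity established in equation (1.2.4) of the proof of Theorem 1.2.) -/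
/-!
Moulds over ℚ: a mould is a family `A = (A_r)_{r ≥ 0}` where `A_r` lies in the
field `ℚ(u_1, …, u_r)` of rational functions in `r` commuting variables,
realized here as the fraction field of `MvPolynomial (Fin r) ℚ`.
Substitution of ℚ-linearly independent linear forms is realized by lifting the
corresponding (injective) polynomial substitution map to the fraction fields.
-/

noncomputable section

/-- The polynomial ring `ℚ[u_1, …, u_r]` (variables are 0-indexed). -/
abbrev MPoly (r : ℕ) : Type := MvPolynomial (Fin r) ℚ

/-- The field of rational functions `ℚ(u_1, …, u_r)`. -/
abbrev MFrac (r : ℕ) : Type := FractionRing (MPoly r)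

/-- A mould over ℚ: its depth-`r` part is a rational function of `r` variables;
its depth-`0` part is a constant. -/
abbrev Mould : Type := (r : ℕ) → MFrac r

/-- The canonical embedding of polynomials into rational functions. -/
def toF {r : ℕ} (p : MPoly r) : MFrac r := algebraMap (MPoly r) (MFrac r) p

/-- The constant `q` viewed as a rational function in `r` variables. -/
def constF (r : ℕ) (q : ℚ) : MFrac r := toF (MvPolynomial.C q)

/-- The variable `u_{k+1}` (0-indexed: `X k`), with junk value `0` out of range. -/
def Xn (r k : ℕ) : MPoly r := if h : k < r then MvPolynomial.X ⟨k, h⟩ else 0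

/-- The linear form `u_1 + ⋯ + u_n`. -/
def sumXn (r n : ℕ) : MPoly r := ∑ k ∈ Finset.range n, Xn r k

/-- Substitution `A(ℓ_1, …, ℓ_s)` of a family of polynomials (in applications:
ℚ-linearly independent linear forms in `u_1, …, u_r`) into a rational function
`A ∈ ℚ(u_1,…,u_s)`, obtained by lifting the polynomial substitution map to the
fraction fields; junk value `0` if the substitution map is not injective
(which never occurs for linearly independent linear forms). -/
def msubst {s r : ℕ} (ℓ : Fin s → MPoly r) (A : MFrac s) : MFrac r := by
  classical
  exact if h : Function.Injective ((algebraMap (MPoly r) (MFrac r)).comp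
      (MvPolynomial.aeval (R := ℚ) ℓ).toRingHom)
    then IsFractionRing.lift h A else 0

/-! ### The basic mould operators -/

/-- Arguments of the swap: `(swap A)(v_1,…,v_r) = A(v_r, v_{r-1}-v_r, …, v_1-v_2)`. -/
def swapArgs (r : ℕ) : Fin r → MPoly r := fun m => Xn r (r - 1 - m.val) - Xn r (r - m.val)

/-- The swap of a mould. -/
def swapM (A : Mould) : Mould := fun r => msubst (swapArgs r) (A r)

/-- `(push_u A)(u_1,…,u_r) = A(−u_1−⋯−u_r, u_1,…,u_{r−1})`. -/
def pushArgs (r : ℕ) : Fin r → MPoly r := fun m =>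
  if m.val = 0 then -(sumXn r r) else Xn r (m.val - 1)

def pushU (A : Mould) : Mould := fun r => msubst (pushArgs r) (A r)

/-- `(push_u⁻¹ A)(u_1,…,u_r) = A(u_2,…,u_r, −u_1−⋯−u_r)`. -/
def pushInvArgs (r : ℕ) : Fin r → MPoly r := fun m =>
  if m.val = r - 1 then -(sumXn r r) else Xn r (m.val + 1)

def pushUInv (A : Mould) : Mould := fun r => msubst (pushInvArgs r) (A r)

/-- `(push_v B)(v_1,…,v_r) = B(−v_r, v_1−v_r, …, v_{r−1}−v_r)`. -/
def pushVArgs (r : ℕ) : Fin r → MPoly r := fun m =>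
  if m.val = 0 then -(Xn r (r - 1)) else Xn r (m.val - 1) - Xn r (r - 1)

def pushV (A : Mould) : Mould := fun r => msubst (pushVArgs r) (A r)

/-- `(push_v⁻¹ B)(v_1,…,v_r) = B(v_2−v_1, …, v_r−v_1, −v_1)`. -/
def pushVInvArgs (r : ℕ) : Fin r → MPoly r := fun m =>
  if m.val = r - 1 then -(Xn r 0) else Xn r (m.val + 1) - Xn r 0

def pushVInv (A : Mould) : Mould := fun r => msubst (pushVInvArgs r) (A r)

/-- `(circ B)(v_1,…,v_r) = B(v_2,…,v_r,v_1)`. -/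
def circArgs (r : ℕ) : Fin r → MPoly r := fun m =>
  if m.val = r - 1 then Xn r 0 else Xn r (m.val + 1)

def circM (A : Mould) : Mould := fun r => msubst (circArgs r) (A r)

/-- `(dur A)(u_1,…,u_r) = (u_1+⋯+u_r)·A(u_1,…,u_r)`. -/
def durM (A : Mould) : Mould := fun r => toF (sumXn r r) * A r

/-- `(dar A)(u_1,…,u_r) = u_1⋯u_r·A(u_1,…,u_r)`. -/
def darM (A : Mould) : Mould := fun r => toF (∏ k ∈ Finset.range r, Xn r k) * A r

/-- `(dar⁻¹ A)(u_1,…,u_r) = A(u_1,…,u_r)/(u_1⋯u_r)`. -/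
def darInv (A : Mould) : Mould := fun r => A r / toF (∏ k ∈ Finset.range r, Xn r k)

/-- `Δ = dar ∘ dur`. -/
def deltaM (A : Mould) : Mould := darM (durM A)

/-- `Δ⁻¹`, dividing the depth-`r` part by `u_1⋯u_r·(u_1+⋯+u_r)`. -/
def deltaInv (A : Mould) : Mould := fun r =>
  A r / toF ((∏ k ∈ Finset.range r, Xn r k) * sumXn r r)

/-! ### The Fay operator -/

/-- Arguments of the `i`-th Fay term (`1 ≤ i ≤ r`):
`(u_2,…,u_i, −ū_i, ū_{i+1}, u_{i+2},…,u_r)` for `i < r`, and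
`(u_2,…,u_r, −ū_r)` for `i = r`, where `ū_i = u_1+⋯+u_i`. -/
def fayArgs (r i : ℕ) : Fin r → MPoly r := fun m =>
  if m.val + 1 < i then Xn r (m.val + 1)
  else if m.val + 1 = i then -(sumXn r i)
  else if m.val = i then sumXn r (i + 1)
  else Xn r m.val

/-- The Fay operator:
`ℱ(B)(u_1,…,u_r) = B(u_1,…,u_r) + B(u_2,…,u_r,−ū_r) + Σ_{i=1}^{r−1} B(u_2,…,u_i,−ū_i,ū_{i+1},u_{i+2},…,u_r)`. -/
def Fay (A : Mould) : Mould := fun r =>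
  A r + ∑ i ∈ Finset.Icc 1 r, msubst (fayArgs r i) (A r)

/-! ### Shuffles, alternality, push-invariance and circ-neutrality -/

/-- Arguments realizing the shuffle of `(u_1,…,u_k)` and `(u_{k+1},…,u_r)` whose
set of positions for the first word is `S` (with `S.card = k`). -/
def shuffleArgs (r : ℕ) (S : Finset (Fin r)) : Fin r → MPoly r := fun m =>
  if m ∈ S then Xn r ((S.filter (fun x => x < m)).card)
  else Xn r (S.card + ((Sᶜ.filter (fun x => x < m)).card))

/-- A mould is alternal if all its shuffle sums
`A(sh((u_1,…,u_k),(u_{k+1},…,u_r)))` for `1 ≤ k ≤ r−1` vanish. -/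
def Alternal (A : Mould) : Prop :=
  ∀ r k : ℕ, 1 ≤ k → k < r →
    ∑ S ∈ Finset.powersetCard k (Finset.univ : Finset (Fin r)),
      msubst (shuffleArgs r S) (A r) = 0

/-- A mould is push-invariant if `push_u A = A` in every depth `r ≥ 1`. -/
def PushInvariant (A : Mould) : Prop := ∀ r : ℕ, 1 ≤ r → pushU A r = A r

/-- Arguments of the `i`-th term (`1 ≤ i ≤ r`) of the shuffle sum
`B(sh((v_1),(v_2,…,v_r)))`, namely `(v_2,…,v_i, v_1, v_{i+1},…,v_r)`. -/
def sh1Args (r i : ℕ) : Fin r → MPoly r := fun m =>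
  if m.val + 1 < i then Xn r (m.val + 1)
  else if m.val + 1 = i then Xn r 0
  else Xn r m.val

/-! ### Mould multiplication, `arat`, and exponentials -/

/-- Arguments `(u_{a+1}, …, u_{a+s})` (a consecutive segment of variables). -/
def segArgs (r a : ℕ) {s : ℕ} : Fin s → MPoly r := fun m => Xn r (a + m.val)

/-- Arguments `(u_1,…,u_{a−1}, u_a+⋯+u_b, u_{b+1},…,u_r)` (the block `u_a…u_b`
merged into a single sum), of length `s = r − (b − a)`. -/
def mergeArgs (r a b : ℕ) {s : ℕ} : Fin s → MPoly r := fun m =>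
  if m.val + 1 < a then Xn r m.val
  else if m.val + 1 = a then ∑ k ∈ Finset.Icc (a - 1) (b - 1), Xn r k
  else Xn r (b + m.val - a)

/-- The mould `arat(M)·Q`. -/
def arat (M Q : Mould) : Mould := fun r =>
  (∑ i ∈ Finset.Icc 1 (r - 1), ∑ j ∈ Finset.Icc (i + 1) (r - 1),
      msubst (segArgs r i) (M (j - i)) *
        (msubst (mergeArgs r i j) (Q (r - (j - i))) -
          msubst (mergeArgs r (i + 1) (j + 1)) (Q (r - (j - i)))))
  + (∑ i ∈ Finset.Icc 1 (r - 1),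
      msubst (segArgs r 0) (M i) *
        (msubst (segArgs r i) (Q (r - i)) - msubst (mergeArgs r 1 (i + 1)) (Q (r - i))))
  + (∑ i ∈ Finset.Icc 1 (r - 1),
      msubst (segArgs r i) (M (r - i)) *
        (msubst (mergeArgs r i r) (Q i) - msubst (segArgs r 0) (Q i)))

/-- Mould multiplication `mu(A,B)(u_1,…,u_r) = Σ_i A(u_1,…,u_i)B(u_{i+1},…,u_r)`. -/
def muM (A B : Mould) : Mould := fun r =>
  ∑ i ∈ Finset.range (r + 1), msubst (segArgs r 0) (A i) * msubst (segArgs r i) (B (r - i))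

/-- The unit mould for `mu`. -/
def oneMould : Mould := fun r => if r = 0 then 1 else 0

/-- `mu`-powers of a mould. -/
def muPow (Q : Mould) : ℕ → Mould
  | 0 => oneMould
  | n + 1 => muM (muPow Q n) Q

/-- `exp_mu(Q) = Σ_{n≥0} Q^{·n}/n!`; for `Q ∈ ARI` this is a finite sum in each
depth, since `Q^{·n}` vanishes in depths `< n`. -/
def expMu (Q : Mould) : Mould := fun r =>
  ∑ n ∈ Finset.range (r + 1), constF r (1 / (n.factorial : ℚ)) * muPow Q n r

/-- Arguments `(v_1−v_r, …, v_j−v_r, −v_r, v_{j+1}−v_r, …, v_{r−1}−v_r)`: the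
insertion of `−v_r` at (0-indexed) position `j` into `(v_1−v_r,…,v_{r−1}−v_r)`. -/
def faySwapArgs (r j : ℕ) : Fin r → MPoly r := fun m =>
  if m.val < j then Xn r m.val - Xn r (r - 1)
  else if m.val = j then -(Xn r (r - 1))
  else Xn r (m.val - 1) - Xn r (r - 1)


/-! ### Auxiliary lemmas for the proof of equation (1.2.4) -/

open MvPolynomial Function

section Aux

lemma aeval_Xn {r r' : ℕ} (ℓ : Fin r → MPoly r') (k : ℕ) :
    aeval ℓ (Xn r k) = if h : k < r then ℓ ⟨k, h⟩ else 0 := by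
  unfold Xn; split <;> simp

lemma aeval_sumXn {r r' : ℕ} (ℓ : Fin r → MPoly r') (n : ℕ) :
    aeval ℓ (sumXn r n) = ∑ k ∈ Finset.range n, if h : k < r then ℓ ⟨k, h⟩ else 0 := by
  unfold sumXn
  rw [map_sum]
  exact Finset.sum_congr rfl fun k _ => aeval_Xn ℓ k

lemma injective_of_leftInv {r : ℕ} (ℓ g : Fin r → MPoly r)
    (h : ∀ m : Fin r, aeval g (ℓ m) = X m) :
    Function.Injective ((algebraMap (MPoly r) (MFrac r)).comp
      (MvPolynomial.aeval (R := ℚ) ℓ).toRingHom) := by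
  have h2 : ∀ p : MPoly r, aeval g (aeval ℓ p) = p := by
    intro p
    have heq : (aeval g).comp (aeval (R := ℚ) ℓ) = AlgHom.id ℚ (MPoly r) := by
      apply MvPolynomial.algHom_ext
      intro m
      show (aeval g) ((aeval ℓ) (X m)) = X m
      rw [aeval_X, h m]
    calc aeval g (aeval ℓ p) = ((aeval g).comp (aeval (R := ℚ) ℓ)) p := rfl
      _ = p := by rw [heq]; rfl
  have hinj : Function.Injective (aeval (R := ℚ) ℓ) := by
    intro a b hab
    have := congrArg (aeval (R := ℚ) g) hab
    rwa [h2, h2] at this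
  exact (IsFractionRing.injective (MPoly r) (MFrac r)).comp hinj

lemma msubst_eq {s r : ℕ} (ℓ : Fin s → MPoly r)
    (h : Function.Injective ((algebraMap (MPoly r) (MFrac r)).comp
      (MvPolynomial.aeval (R := ℚ) ℓ).toRingHom)) (A : MFrac s) :
    msubst ℓ A = IsFractionRing.lift h A := by
  unfold msubst; rw [dif_pos h]

lemma msubst_add {s r : ℕ} (ℓ : Fin s → MPoly r)
    (h : Function.Injective ((algebraMap (MPoly r) (MFrac r)).comp
      (MvPolynomial.aeval (R := ℚ) ℓ).toRingHom)) (A B : MFrac s) :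
    msubst ℓ (A + B) = msubst ℓ A + msubst ℓ B := by
  rw [msubst_eq _ h, msubst_eq _ h, msubst_eq _ h, map_add]

lemma msubst_sum {s r : ℕ} (ℓ : Fin s → MPoly r)
    (h : Function.Injective ((algebraMap (MPoly r) (MFrac r)).comp
      (MvPolynomial.aeval (R := ℚ) ℓ).toRingHom)) {α : Type} (T : Finset α) (f : α → MFrac s) :
    msubst ℓ (∑ i ∈ T, f i) = ∑ i ∈ T, msubst ℓ (f i) := by
  rw [msubst_eq _ h, map_sum]
  exact Finset.sum_congr rfl fun i _ => (msubst_eq _ h _).symm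

lemma msubst_msubst {t s r : ℕ} (ℓ : Fin s → MPoly r) (ℓ' : Fin t → MPoly s)
    (h1 : Function.Injective ((algebraMap (MPoly r) (MFrac r)).comp
      (MvPolynomial.aeval (R := ℚ) ℓ).toRingHom))
    (h2 : Function.Injective ((algebraMap (MPoly s) (MFrac s)).comp
      (MvPolynomial.aeval (R := ℚ) ℓ').toRingHom))
    (A : MFrac t) :
    msubst ℓ (msubst ℓ' A) = msubst (fun m => aeval ℓ (ℓ' m)) A := by
  have hcomp : (aeval (R := ℚ) (fun m => aeval ℓ (ℓ' m))) =
      (aeval (R := ℚ) ℓ).comp (aeval (R := ℚ) ℓ') := by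
    apply MvPolynomial.algHom_ext
    intro m
    show aeval _ (X m) = (aeval ℓ) ((aeval ℓ') (X m))
    rw [aeval_X, aeval_X]
  have hinj' : Function.Injective (aeval (R := ℚ) ℓ') := by
    have h' : Function.Injective ((algebraMap (MPoly s) (MFrac s)) ∘ (aeval (R := ℚ) ℓ')) := h2
    exact Function.Injective.of_comp h'
  have h3 : Function.Injective ((algebraMap (MPoly r) (MFrac r)).comp
      (MvPolynomial.aeval (R := ℚ) (fun m => aeval ℓ (ℓ' m))).toRingHom) := by
    have he : ((algebraMap (MPoly r) (MFrac r)).comp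
        (MvPolynomial.aeval (R := ℚ) (fun m => aeval ℓ (ℓ' m))).toRingHom : MPoly t → MFrac r)
        = (⇑(algebraMap (MPoly r) (MFrac r)) ∘ aeval (R := ℚ) ℓ) ∘ aeval (R := ℚ) ℓ' := by
      funext p
      show algebraMap (MPoly r) (MFrac r) (aeval (fun m => aeval ℓ (ℓ' m)) p) = _
      rw [hcomp]
      rfl
    rw [show ((algebraMap (MPoly r) (MFrac r)).comp
        (MvPolynomial.aeval (R := ℚ) (fun m => aeval ℓ (ℓ' m))).toRingHom : MPoly t → MFrac r)
        = (⇑(algebraMap (MPoly r) (MFrac r)) ∘ aeval (R := ℚ) ℓ) ∘ aeval (R := ℚ) ℓ' from he]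
    exact Function.Injective.comp h1 hinj'
  rw [msubst_eq ℓ h1, msubst_eq ℓ' h2, msubst_eq _ h3]
  have hlift : (IsFractionRing.lift (K := MFrac s) h1).comp (IsFractionRing.lift (K := MFrac t) h2)
      = IsFractionRing.lift (K := MFrac t) h3 := by
    apply IsLocalization.ringHom_ext (S := MFrac t) (nonZeroDivisors (MPoly t))
    refine RingHom.ext fun x => ?_
    simp only [RingHom.comp_apply, IsFractionRing.lift_algebraMap]
    rw [hcomp]
    rfl
  calc IsFractionRing.lift h1 (IsFractionRing.lift h2 A)
      = (IsFractionRing.lift (K := MFrac s) h1).comp (IsFractionRing.lift (K := MFrac t) h2) A := rfl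
    _ = IsFractionRing.lift h3 A := by rw [hlift]

/-! ### Explicit inverse substitutions -/

/-- Inverse of the swap substitution. -/
def swapInv (r : ℕ) : Fin r → MPoly r := fun k => sumXn r (r - k.val)

/-- Inverse of the `i`-th Fay substitution. -/
def fayInv (r i : ℕ) : Fin r → MPoly r := fun k =>
  if k.val = 0 then -(sumXn r i)
  else if k.val < i then Xn r (k.val - 1)
  else if k.val = i then Xn r (i - 1) + Xn r i
  else Xn r k.val

/-- Inverse of the `j`-th swapped-Fay substitution. -/
def faySwapInv (r j : ℕ) : Fin r → MPoly r := fun k =>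
  if k.val = r - 1 then -(Xn r j)
  else if k.val < j then Xn r k.val - Xn r j
  else Xn r (k.val + 1) - Xn r j

lemma swapArgs_val (r k : ℕ) (h : k < r) :
    swapArgs r ⟨k, h⟩ = Xn r (r - 1 - k) - Xn r (r - k) := rfl

lemma fayArgs_val (r i k : ℕ) (h : k < r) :
    fayArgs r i ⟨k, h⟩ = if k + 1 < i then Xn r (k + 1)
      else if k + 1 = i then -(sumXn r i)
      else if k = i then sumXn r (i + 1)
      else Xn r k := rfl

lemma faySwapArgs_val (r j k : ℕ) (h : k < r) :
    faySwapArgs r j ⟨k, h⟩ = if k < j then Xn r k - Xn r (r - 1)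
      else if k = j then -(Xn r (r - 1))
      else Xn r (k - 1) - Xn r (r - 1) := rfl

lemma swapInv_val (r k : ℕ) (h : k < r) : swapInv r ⟨k, h⟩ = sumXn r (r - k) := rfl

lemma fayInv_val (r i k : ℕ) (h : k < r) :
    fayInv r i ⟨k, h⟩ = if k = 0 then -(sumXn r i)
      else if k < i then Xn r (k - 1)
      else if k = i then Xn r (i - 1) + Xn r i
      else Xn r k := rfl

lemma faySwapInv_val (r j k : ℕ) (h : k < r) :
    faySwapInv r j ⟨k, h⟩ = if k = r - 1 then -(Xn r j)
      else if k < j then Xn r k - Xn r j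
      else Xn r (k + 1) - Xn r j := rfl

lemma sumXn_succ (r n : ℕ) : sumXn r (n + 1) = sumXn r n + Xn r n :=
  Finset.sum_range_succ _ _

lemma Xn_out (r k : ℕ) (h : ¬ k < r) : Xn r k = 0 := by unfold Xn; rw [dif_neg h]

lemma Xn_eq_X (r : ℕ) (m : Fin r) : Xn r m.val = X m := by
  unfold Xn; rw [dif_pos m.isLt]

/-! ### Left-inverse identities -/

lemma swapInv_left (r : ℕ) (m : Fin r) : aeval (swapInv r) (swapArgs r m) = X m := by
  have hm := m.isLt
  rw [show swapArgs r m = Xn r (r - 1 - m.val) - Xn r (r - m.val) from rfl]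
  rw [map_sub, aeval_Xn, aeval_Xn]
  rw [dif_pos (show r - 1 - m.val < r by omega), swapInv_val]
  by_cases h0 : m.val = 0
  · rw [dif_neg (show ¬ (r - m.val < r) by omega)]
    rw [show r - (r - 1 - m.val) = m.val + 1 by omega, sumXn_succ]
    rw [show sumXn r m.val = 0 by rw [h0]; rfl]
    rw [sub_zero, zero_add, Xn_eq_X]
  · rw [dif_pos (show r - m.val < r by omega), swapInv_val]
    rw [show r - (r - 1 - m.val) = m.val + 1 by omega,
        show r - (r - m.val) = m.val by omega, sumXn_succ]
    rw [add_sub_cancel_left, Xn_eq_X]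

lemma fayInv_sum (r i : ℕ) (hi1 : 1 ≤ i) (hir : i ≤ r) :
    aeval (fayInv r i) (sumXn r i) = -(Xn r (i - 1)) := by
  rw [aeval_sumXn]
  have hc : ∀ k ∈ Finset.range i, (if h : k < r then fayInv r i ⟨k, h⟩ else 0)
      = (if k = 0 then -(sumXn r i) else Xn r (k - 1)) := by
    intro k hk
    rw [Finset.mem_range] at hk
    rw [dif_pos (show k < r by omega), fayInv_val]
    by_cases h0 : k = 0
    · rw [if_pos h0, if_pos h0]
    · rw [if_neg h0, if_neg h0, if_pos (show k < i by omega)]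
  rw [Finset.sum_congr rfl hc]
  obtain ⟨i', rfl⟩ : ∃ i', i = i' + 1 := ⟨i - 1, by omega⟩
  rw [Finset.sum_range_succ']
  have hc2 : ∀ k ∈ Finset.range i',
      (if k + 1 = 0 then -(sumXn r (i' + 1)) else Xn r (k + 1 - 1)) = Xn r k := by
    intro k _
    rw [if_neg (Nat.succ_ne_zero k)]
    rfl
  rw [Finset.sum_congr rfl hc2, if_pos rfl]
  rw [show (∑ k ∈ Finset.range i', Xn r k) = sumXn r i' from rfl, sumXn_succ]
  rw [show i' + 1 - 1 = i' by omega]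
  ring

lemma fayInv_left (r i : ℕ) (hi1 : 1 ≤ i) (hir : i ≤ r) (m : Fin r) :
    aeval (fayInv r i) (fayArgs r i m) = X m := by
  have hm := m.isLt
  rw [show fayArgs r i m = fayArgs r i ⟨m.val, hm⟩ from rfl, fayArgs_val]
  by_cases h1 : m.val + 1 < i
  · rw [if_pos h1, aeval_Xn, dif_pos (show m.val + 1 < r by omega), fayInv_val]
    rw [if_neg (Nat.succ_ne_zero _), if_pos h1]
    rw [show m.val + 1 - 1 = m.val by omega, Xn_eq_X]
  · rw [if_neg h1]
    by_cases h2 : m.val + 1 = i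
    · rw [if_pos h2, map_neg, fayInv_sum r i hi1 hir, neg_neg]
      rw [show i - 1 = m.val by omega, Xn_eq_X]
    · rw [if_neg h2]
      by_cases h3 : m.val = i
      · rw [if_pos h3, sumXn_succ, map_add, fayInv_sum r i hi1 hir, aeval_Xn]
        rw [dif_pos (show i < r by omega), fayInv_val]
        rw [if_neg (show ¬ i = 0 by omega), if_neg (show ¬ i < i by omega), if_pos rfl]
        rw [show Xn r i = X m by rw [← h3]; exact Xn_eq_X r m]
        ring_nf
      · rw [if_neg h3, aeval_Xn, dif_pos hm, fayInv_val]
        rw [if_neg (show ¬ m.val = 0 by omega), if_neg (show ¬ m.val < i by omega),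
            if_neg h3, Xn_eq_X]

lemma faySwapInv_left (r j : ℕ) (hj : j < r) (m : Fin r) :
    aeval (faySwapInv r j) (faySwapArgs r j m) = X m := by
  have hm := m.isLt
  rw [show faySwapArgs r j m = faySwapArgs r j ⟨m.val, hm⟩ from rfl, faySwapArgs_val]
  have hG : aeval (faySwapInv r j) (Xn r (r - 1)) = -(Xn r j) := by
    rw [aeval_Xn, dif_pos (show r - 1 < r by omega), faySwapInv_val, if_pos rfl]
  by_cases h1 : m.val < j
  · rw [if_pos h1, map_sub, hG, aeval_Xn, dif_pos hm, faySwapInv_val]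
    rw [if_neg (show ¬ m.val = r - 1 by omega), if_pos h1, Xn_eq_X]
    ring
  · rw [if_neg h1]
    by_cases h2 : m.val = j
    · rw [if_pos h2, map_neg, hG, neg_neg, show j = m.val from h2.symm, Xn_eq_X]
    · rw [if_neg h2, map_sub, hG, aeval_Xn, dif_pos (show m.val - 1 < r by omega),
          faySwapInv_val]
      rw [if_neg (show ¬ m.val - 1 = r - 1 by omega), if_neg (show ¬ m.val - 1 < j by omega)]
      rw [show m.val - 1 + 1 = m.val by omega, Xn_eq_X]
      ring

/-! ### Injectivity of the substitutions -/

lemma inj_swap (r : ℕ) :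
    Function.Injective ((algebraMap (MPoly r) (MFrac r)).comp
      (MvPolynomial.aeval (R := ℚ) (swapArgs r)).toRingHom) :=
  injective_of_leftInv _ (swapInv r) (swapInv_left r)

lemma inj_fay (r i : ℕ) (hi1 : 1 ≤ i) (hir : i ≤ r) :
    Function.Injective ((algebraMap (MPoly r) (MFrac r)).comp
      (MvPolynomial.aeval (R := ℚ) (fayArgs r i)).toRingHom) :=
  injective_of_leftInv _ (fayInv r i) (fayInv_left r i hi1 hir)

lemma inj_fsw (r j : ℕ) (hj : j < r) :
    Function.Injective ((algebraMap (MPoly r) (MFrac r)).comp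
      (MvPolynomial.aeval (R := ℚ) (faySwapArgs r j)).toRingHom) :=
  injective_of_leftInv _ (faySwapInv r j) (faySwapInv_left r j hj)

/-! ### The key pointwise identity -/

lemma aeval_swap_sumXn (r : ℕ) : ∀ i, i ≤ r → aeval (swapArgs r) (sumXn r i) = Xn r (r - i) := by
  intro i
  induction i with
  | zero =>
    intro _
    rw [show sumXn r 0 = 0 from rfl, map_zero, Nat.sub_zero, Xn_out r r (by omega)]
  | succ n ih =>
    intro h
    rw [sumXn_succ, map_add, ih (by omega), aeval_Xn, dif_pos (show n < r by omega),
        swapArgs_val]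
    rw [show r - 1 - n = r - (n + 1) by omega]
    ring

lemma key (r i : ℕ) (hi1 : 1 ≤ i) (hir : i ≤ r) (m : Fin r) :
    aeval (swapArgs r) (fayArgs r i m) = aeval (faySwapArgs r (r - i)) (swapArgs r m) := by
  have hm := m.isLt
  rw [show swapArgs r m = Xn r (r - 1 - m.val) - Xn r (r - m.val) from rfl]
  rw [map_sub, aeval_Xn, aeval_Xn, dif_pos (show r - 1 - m.val < r by omega), faySwapArgs_val]
  rw [show fayArgs r i m = fayArgs r i ⟨m.val, hm⟩ from rfl, fayArgs_val]
  by_cases h1 : m.val + 1 < i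
  · -- case (a)
    rw [if_pos h1, aeval_Xn, dif_pos (show m.val + 1 < r by omega), swapArgs_val]
    rw [if_neg (show ¬ r - 1 - m.val < r - i by omega),
        if_neg (show ¬ r - 1 - m.val = r - i by omega)]
    by_cases h0 : m.val = 0
    · rw [dif_neg (show ¬ r - m.val < r by omega)]
      rw [show r - 1 - (m.val + 1) = r - 1 - m.val - 1 by omega,
          show r - (m.val + 1) = r - 1 by omega]
      ring
    · rw [dif_pos (show r - m.val < r by omega), faySwapArgs_val,
          if_neg (show ¬ r - m.val < r - i by omega), if_neg (show ¬ r - m.val = r - i by omega)]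
      rw [show r - 1 - (m.val + 1) = r - 1 - m.val - 1 by omega,
          show r - (m.val + 1) = r - m.val - 1 by omega]
      ring
  · rw [if_neg h1]
    by_cases h2 : m.val + 1 = i
    · -- case (b)
      rw [if_pos h2, map_neg, aeval_swap_sumXn r i hir]
      rw [if_neg (show ¬ r - 1 - m.val < r - i by omega),
          if_pos (show r - 1 - m.val = r - i by omega)]
      by_cases hi : i = 1
      · rw [dif_neg (show ¬ r - m.val < r by omega)]
        rw [show r - i = r - 1 by omega]
        ring
      · rw [dif_pos (show r - m.val < r by omega), faySwapArgs_val,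
            if_neg (show ¬ r - m.val < r - i by omega),
            if_neg (show ¬ r - m.val = r - i by omega)]
        rw [show r - m.val - 1 = r - i by omega]
        ring
    · rw [if_neg h2]
      by_cases h3 : m.val = i
      · -- case (c)
        rw [if_pos h3, aeval_swap_sumXn r (i + 1) (by omega)]
        rw [if_pos (show r - 1 - m.val < r - i by omega)]
        rw [dif_pos (show r - m.val < r by omega), faySwapArgs_val,
            if_neg (show ¬ r - m.val < r - i by omega),
            if_pos (show r - m.val = r - i by omega)]
        rw [show r - 1 - m.val = r - (i + 1) by omega]
        ring
      · -- case (d)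
        rw [if_neg h3, aeval_Xn, dif_pos hm, swapArgs_val]
        rw [if_pos (show r - 1 - m.val < r - i by omega)]
        rw [dif_pos (show r - m.val < r by omega), faySwapArgs_val,
            if_pos (show r - m.val < r - i by omega)]
        ring

end Aux

/-- **Equation (1.2.4).** For every mould `B ∈ ARI` and every `r ≥ 2`,
`swap(ℱ(B))(v_1,…,v_r) = (swap B)(v_1,…,v_r)
  + Σ_{j=0}^{r−1} (swap B)(v_1−v_r, …, v_j−v_r, −v_r, v_{j+1}−v_r, …, v_{r−1}−v_r)`,
i.e. `swap(ℱ(B)) = swap B + (swap B)(sh((−v_r),(v_1−v_r,…,v_{r−1}−v_r)))`. -/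
theorem swap_Fay_eq (B : Mould) (hB : B 0 = 0) :
    ∀ r : ℕ, 2 ≤ r →
      swapM (Fay B) r
        = swapM B r + ∑ j ∈ Finset.range r, msubst (faySwapArgs r j) (swapM B r) := by
  intro r hr
  have hsw := inj_swap r
  show msubst (swapArgs r) (Fay B r) = _
  rw [show Fay B r = B r + ∑ i ∈ Finset.Icc 1 r, msubst (fayArgs r i) (B r) from rfl]
  rw [msubst_add _ hsw, msubst_sum _ hsw]
  congr 1
  have hstep : ∀ i ∈ Finset.Icc 1 r,
      msubst (swapArgs r) (msubst (fayArgs r i) (B r))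
        = msubst (faySwapArgs r (r - i)) (swapM B r) := by
    intro i hi
    rw [Finset.mem_Icc] at hi
    rw [msubst_msubst _ _ hsw (inj_fay r i hi.1 hi.2)]
    rw [show swapM B r = msubst (swapArgs r) (B r) from rfl]
    rw [msubst_msubst _ _ (inj_fsw r (r - i) (by omega)) hsw]
    congr 1
    funext m
    exact key r i hi.1 hi.2 m
  rw [Finset.sum_congr rfl hstep]
  apply Finset.sum_nbij' (fun i => r - i) (fun j => r - j)
  · intro a ha
    rw [Finset.mem_Icc] at ha
    rw [Finset.mem_range]
    omega
  · intro a ha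
    rw [Finset.mem_range] at ha
    rw [Finset.mem_Icc]
    omega
  · intro a ha
    rw [Finset.mem_Icc] at ha
    omega
  · intro a ha
    rw [Finset.mem_range] at ha
    omega
  · intro a _
    rfl

end
end

section
/- Theorem 1.3: Let M ∈ ARI be alternal and push-invariant with ΔM a polynomial mould, set A' := dur M, and let C = (c_r)_{r≥0} be a constant mould. Then the following are equivalent (with the same C): (i) swap M + C satisfies the first alternality relation, i.e. Σ_{i=1}^{r} (swap M)(v_2,…,v_i, v_1, v_{i+1},…,v_r) = −r·c_r for every r ≥ 2; (ii) swap M + C is circ-neutral, i.e. Σ_{i=0}^{r−1} (circ^i(swap M))(v_1,…,v_r) = −r·c_r for every r ≥ 2; (iii) ℱ(A')(u_1,…,u_r) = −r·c_r·(u_2+⋯+u_r) for every r ≥ 2. -/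
/-!
Moulds over ℚ: a mould is a family `A = (A_r)_{r ≥ 0}` where `A_r` lies in the
field `ℚ(u_1, …, u_r)` of rational functions in `r` commuting variables,
realized here as the fraction field of `MvPolynomial (Fin r) ℚ`.
Substitution of ℚ-linearly independent linear forms is realized by lifting the
corresponding (injective) polynomial substitution map to the fraction fields.
-/

noncomputable section

/-- A polynomial mould: each depth-`r` part is (the image of) a polynomial. -/
def IsPolynomialMould (A : Mould) : Prop :=
  ∀ r : ℕ, A r ∈ Set.range (algebraMap (MPoly r) (MFrac r))

/-! ### Infrastructure for the proof -/

namespace Thm13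
open MvPolynomial Finset

/-- The substitution ring hom into the fraction field. -/
def substHom {s r : ℕ} (ℓ : Fin s → MPoly r) : MvPolynomial (Fin s) ℚ →+* MFrac r :=
  ((algebraMap (MPoly r) (MFrac r)).comp (MvPolynomial.aeval (R := ℚ) ℓ).toRingHom)

/-- A substitution family whose induced hom is injective. -/
def Good {s r : ℕ} (ℓ : Fin s → MPoly r) : Prop := Function.Injective (substHom ℓ)

lemma substHom_apply {s r : ℕ} (ℓ : Fin s → MPoly r) (p : MvPolynomial (Fin s) ℚ) :
    substHom ℓ p = toF (aeval (R := ℚ) ℓ p) := rfl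

lemma toF_injective (r : ℕ) : Function.Injective (toF (r := r)) :=
  IsFractionRing.injective (MPoly r) (MFrac r)

lemma aeval_inj_of_inv {s r : ℕ} {ℓ : Fin s → MPoly r} (g : Fin r → MPoly s)
    (h : ∀ m, aeval (R := ℚ) g (ℓ m) = X m) :
    Function.Injective (aeval (R := ℚ) ℓ) := by
  have hcomp : (aeval (R := ℚ) g).comp (aeval (R := ℚ) ℓ) = AlgHom.id ℚ _ := by
    rw [comp_aeval ℓ (aeval (R := ℚ) g)]
    simp only [h]
    exact aeval_X_left
  intro a b hab
  have h1 : ((aeval (R := ℚ) g).comp (aeval (R := ℚ) ℓ)) a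
      = ((aeval (R := ℚ) g).comp (aeval (R := ℚ) ℓ)) b := by
    simp only [AlgHom.comp_apply, hab]
  rwa [hcomp] at h1

lemma good_of_inv {s r : ℕ} {ℓ : Fin s → MPoly r} (g : Fin r → MPoly s)
    (h : ∀ m, aeval (R := ℚ) g (ℓ m) = X m) : Good ℓ := by
  have : Function.Injective (aeval (R := ℚ) ℓ) := aeval_inj_of_inv g h
  exact (toF_injective r).comp this

lemma aeval_inj_of_good {s r : ℕ} {ℓ : Fin s → MPoly r} (h : Good ℓ) :
    Function.Injective (aeval (R := ℚ) ℓ) := by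
  intro a b hab
  exact h (by simp only [substHom_apply, hab])

/-- `msubst` as a ring hom, given injectivity. -/
def subsF {s r : ℕ} {ℓ : Fin s → MPoly r} (h : Good ℓ) : MFrac s →+* MFrac r :=
  IsFractionRing.lift h

lemma msubst_eq {s r : ℕ} {ℓ : Fin s → MPoly r} (h : Good ℓ) (A : MFrac s) :
    msubst ℓ A = subsF h A := by
  unfold msubst
  exact dif_pos h

lemma msubst_toF {s r : ℕ} {ℓ : Fin s → MPoly r} (h : Good ℓ) (p : MvPolynomial (Fin s) ℚ) :
    msubst ℓ (toF p) = toF (aeval (R := ℚ) ℓ p) := by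
  rw [msubst_eq h]
  exact IsFractionRing.lift_algebraMap h p

lemma msubst_div {s r : ℕ} {ℓ : Fin s → MPoly r} (h : Good ℓ) (A B : MFrac s) :
    msubst ℓ (A / B) = msubst ℓ A / msubst ℓ B := by
  rw [msubst_eq h, msubst_eq h, msubst_eq h]
  exact map_div₀ (subsF h) A B

lemma exists_div (s : ℕ) (z : MFrac s) :
    ∃ x y : MPoly s, z = toF x / toF y := by
  obtain ⟨x, y, _, h⟩ := IsFractionRing.div_surjective (A := MPoly s) z
  exact ⟨x, y, h.symm⟩

lemma msubst_constF {s r : ℕ} {ℓ : Fin s → MPoly r} (h : Good ℓ) (q : ℚ) :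
    msubst ℓ (constF s q) = constF r q := by
  rw [constF, msubst_toF h, aeval_C]
  rfl

lemma msubst_injective {s r : ℕ} {ℓ : Fin s → MPoly r} (h : Good ℓ) :
    Function.Injective (msubst ℓ) := by
  intro a b hab
  rw [msubst_eq h, msubst_eq h] at hab
  exact (subsF h).injective hab

lemma msubst_add {s r : ℕ} {ℓ : Fin s → MPoly r} (h : Good ℓ) (A B : MFrac s) :
    msubst ℓ (A + B) = msubst ℓ A + msubst ℓ B := by
  rw [msubst_eq h, msubst_eq h, msubst_eq h]; exact map_add _ A B

lemma msubst_mul {s r : ℕ} {ℓ : Fin s → MPoly r} (h : Good ℓ) (A B : MFrac s) :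
    msubst ℓ (A * B) = msubst ℓ A * msubst ℓ B := by
  rw [msubst_eq h, msubst_eq h, msubst_eq h]; exact map_mul _ A B

lemma msubst_sum {s r : ℕ} {ℓ : Fin s → MPoly r} (h : Good ℓ) {ι : Type*} (T : Finset ι)
    (f : ι → MFrac s) : msubst ℓ (∑ i ∈ T, f i) = ∑ i ∈ T, msubst ℓ (f i) := by
  rw [msubst_eq h]
  rw [map_sum (subsF h) f T]
  exact Finset.sum_congr rfl fun i _ => (msubst_eq h (f i)).symm

/-- Composite family. -/
def famComp {s t r : ℕ} (G : Fin t → MPoly r) (K : Fin s → MPoly t) : Fin s → MPoly r :=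
  fun m => aeval (R := ℚ) G (K m)

lemma aeval_aeval {s t r : ℕ} (G : Fin t → MPoly r) (K : Fin s → MPoly t)
    (p : MvPolynomial (Fin s) ℚ) :
    aeval (R := ℚ) G (aeval (R := ℚ) K p) = aeval (R := ℚ) (famComp G K) p := by
  have := comp_aeval K (aeval (R := ℚ) G)
  calc aeval (R := ℚ) G (aeval (R := ℚ) K p)
      = ((aeval (R := ℚ) G).comp (aeval (R := ℚ) K)) p := rfl
    _ = aeval (R := ℚ) (famComp G K) p := by rw [this]; rfl

lemma famComp_assoc {s t u r : ℕ} (G : Fin u → MPoly r) (H : Fin t → MPoly u)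
    (K : Fin s → MPoly t) : famComp (famComp G H) K = famComp G (famComp H K) := by
  funext m
  show aeval (R := ℚ) (famComp G H) (K m) = aeval (R := ℚ) G ((famComp H K) m)
  rw [← aeval_aeval G H (K m)]
  rfl

lemma good_comp {s t r : ℕ} {G : Fin t → MPoly r} {K : Fin s → MPoly t}
    (hG : Good G) (hK : Good K) : Good (famComp G K) := by
  intro a b hab
  apply aeval_inj_of_good hK
  apply aeval_inj_of_good hG
  apply toF_injective r
  have h1 : ∀ p, substHom (famComp G K) p = toF (aeval (R := ℚ) G (aeval (R := ℚ) K p)) := by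
    intro p
    rw [substHom_apply, aeval_aeval]
  rw [← h1, ← h1, hab]

lemma msubst_msubst {s t r : ℕ} {G : Fin t → MPoly r} {K : Fin s → MPoly t}
    (hG : Good G) (hK : Good K) (A : MFrac s) :
    msubst G (msubst K A) = msubst (famComp G K) A := by
  obtain ⟨x, y, rfl⟩ := exists_div s A
  rw [msubst_div hK, msubst_div hG, msubst_div (good_comp hG hK),
    msubst_toF hK, msubst_toF hK, msubst_toF hG, msubst_toF hG,
    msubst_toF (good_comp hG hK), msubst_toF (good_comp hG hK),
    aeval_aeval, aeval_aeval]

lemma msubst_X {r : ℕ} (A : MFrac r) : msubst (X : Fin r → MPoly r) A = A := by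
  have hg : Good (X : Fin r → MPoly r) := good_of_inv X (by intro m; simp)
  obtain ⟨x, y, rfl⟩ := exists_div r A
  rw [msubst_div hg, msubst_toF hg, msubst_toF hg]
  simp [aeval_X_left]

end Thm13

namespace Thm13
open MvPolynomial Finset

/-! ### Basic evaluation lemmas -/

lemma Xn_lt {r k : ℕ} (h : k < r) : Xn r k = X (⟨k, h⟩ : Fin r) := dif_pos h

lemma Xn_ge {r k : ℕ} (h : r ≤ k) : Xn r k = 0 := dif_neg (by omega)

lemma Xn_val {r : ℕ} (m : Fin r) : Xn r m.val = X m := by rw [Xn_lt m.isLt]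

/-- Value of a family at a natural index, junk `0` out of range. -/
def famOf {s r : ℕ} (ℓ : Fin s → MPoly r) (k : ℕ) : MPoly r :=
  if h : k < s then ℓ ⟨k, h⟩ else 0

lemma famOf_lt {s r : ℕ} (ℓ : Fin s → MPoly r) {k : ℕ} (h : k < s) :
    famOf ℓ k = ℓ ⟨k, h⟩ := dif_pos h

lemma famOf_ge {s r : ℕ} (ℓ : Fin s → MPoly r) {k : ℕ} (h : s ≤ k) :
    famOf ℓ k = 0 := dif_neg (by omega)

lemma aeval_Xn {s r : ℕ} (ℓ : Fin s → MPoly r) (k : ℕ) :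
    aeval (R := ℚ) ℓ (Xn s k) = famOf ℓ k := by
  unfold Xn famOf
  by_cases h : k < s
  · rw [dif_pos h, dif_pos h, aeval_X]
  · rw [dif_neg h, dif_neg h, map_zero]

lemma aeval_sumXn {s r : ℕ} (ℓ : Fin s → MPoly r) (n : ℕ) :
    aeval (R := ℚ) ℓ (sumXn s n) = ∑ k ∈ range n, famOf ℓ k := by
  unfold sumXn
  rw [map_sum]
  exact Finset.sum_congr rfl fun k _ => aeval_Xn ℓ k

lemma sumXn_succ (r n : ℕ) : sumXn r (n + 1) = sumXn r n + Xn r n :=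
  Finset.sum_range_succ _ n

lemma sumXn_one (r : ℕ) : sumXn r 1 = Xn r 0 := Finset.sum_range_one _

/-- `∑_{t<r−1} X_{t+1} = ū_r − u_1`. -/
lemma sum_shift {r : ℕ} (hr : 1 ≤ r) :
    ∑ t ∈ range (r - 1), Xn r (t + 1) = sumXn r r - Xn r 0 := by
  have h := Finset.sum_range_succ' (fun t => Xn r t) (r - 1)
  rw [show r - 1 + 1 = r by omega] at h
  have : sumXn r r = (∑ t ∈ range (r - 1), Xn r (t + 1)) + Xn r 0 := h
  rw [this]
  ring

/-- Telescoping sum of `swapArgs` values. -/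
lemma sum_swap_tele (r : ℕ) : ∀ t, t ≤ r →
    ∑ k ∈ range t, (Xn r (r - 1 - k) - Xn r (r - k)) = Xn r (r - t) := by
  intro t
  induction t with
  | zero => intro _; simp [Xn_ge (le_refl r)]
  | succ t ih =>
    intro ht
    rw [Finset.sum_range_succ, ih (by omega)]
    rw [show r - (t + 1) = r - 1 - t by omega]
    ring

lemma swapArgs_apply (r : ℕ) (m : Fin r) :
    swapArgs r m = Xn r (r - 1 - m.val) - Xn r (r - m.val) := rfl

/-! ### The extra substitution families -/

/-- `σ : (v_1,…,v_r) ↦ (−v_1, v_2−v_1, …, v_r−v_1)`. -/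
def sigArgs (r : ℕ) : Fin r → MPoly r := fun m =>
  if m.val = 0 then -(Xn r 0) else Xn r m.val - Xn r 0

/-- Rotation by `j`. -/
def rotFam (r j : ℕ) : Fin r → MPoly r := fun m => Xn r ((m.val + j) % r)

/-- `(v_1, …, v_r) = (ū_r, ū_{r−1}, …, ū_1)`. -/
def vbarArgs (r : ℕ) : Fin r → MPoly r := fun m => sumXn r (r - m.val)

/-! ### Good instances -/

lemma good_swapArgs {r : ℕ} (hr : 1 ≤ r) : Good (swapArgs r) := by
  apply good_of_inv (vbarArgs r)
  intro m
  rw [swapArgs_apply, map_sub, aeval_Xn, aeval_Xn]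
  have hx : Xn r m.val = X m := Xn_val m
  by_cases hm : m.val = 0
  · rw [famOf_lt _ (show r - 1 - m.val < r by omega), famOf_ge _ (show r ≤ r - m.val by omega)]
    show vbarArgs r _ - 0 = _
    unfold vbarArgs
    rw [show r - (r - 1 - m.val) = 1 by omega, sumXn_one, sub_zero, show (0 : ℕ) = m.val
      from hm.symm, hx]
  · rw [famOf_lt _ (show r - 1 - m.val < r by omega), famOf_lt _ (show r - m.val < r by omega)]
    show vbarArgs r _ - vbarArgs r _ = _
    unfold vbarArgs
    rw [show r - (r - 1 - m.val) = m.val + 1 by omega, show r - (r - m.val) = m.val by omega,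
      sumXn_succ, hx]
    ring

lemma good_vbarArgs {r : ℕ} (hr : 1 ≤ r) : Good (vbarArgs r) := by
  apply good_of_inv (swapArgs r)
  intro m
  show aeval (R := ℚ) (swapArgs r) (sumXn r (r - m.val)) = X m
  rw [aeval_sumXn]
  have h1 : ∀ k ∈ range (r - m.val), famOf (swapArgs r) k
      = Xn r (r - 1 - k) - Xn r (r - k) := fun k hk => by
    rw [Finset.mem_range] at hk
    rw [famOf_lt _ (show k < r by omega)]
    rfl
  rw [Finset.sum_congr rfl h1, sum_swap_tele r (r - m.val) (by omega),
    show r - (r - m.val) = m.val by omega, Xn_val]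

lemma sum_famOf_pushInv {r : ℕ} (hr : 1 ≤ r) :
    ∑ k ∈ range r, famOf (pushInvArgs r) k = -(Xn r 0) := by
  rw [show r = (r - 1) + 1 by omega, Finset.sum_range_succ,
    show (r - 1) + 1 = r by omega]
  have h1 : ∀ k ∈ range (r - 1), famOf (pushInvArgs r) k = Xn r (k + 1) := fun k hk => by
    rw [Finset.mem_range] at hk
    rw [famOf_lt _ (show k < r by omega)]
    show (if k = r - 1 then -(sumXn r r) else Xn r (k + 1)) = _
    rw [if_neg (by omega)]
  have h2 : famOf (pushInvArgs r) (r - 1) = -(sumXn r r) := by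
    rw [famOf_lt _ (show r - 1 < r by omega)]
    show (if r - 1 = r - 1 then -(sumXn r r) else _) = _
    rw [if_pos rfl]
  rw [Finset.sum_congr rfl h1, h2, sum_shift hr]
  ring

lemma sum_famOf_push {r : ℕ} (hr : 1 ≤ r) :
    ∑ k ∈ range r, famOf (pushArgs r) k = -(Xn r (r - 1)) := by
  have h := Finset.sum_range_succ' (famOf (pushArgs r)) (r - 1)
  rw [show r - 1 + 1 = r by omega] at h
  rw [h]
  have h1 : ∀ k ∈ range (r - 1), famOf (pushArgs r) (k + 1) = Xn r k := fun k hk => by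
    rw [Finset.mem_range] at hk
    rw [famOf_lt _ (show k + 1 < r by omega)]
    show (if k + 1 = 0 then -(sumXn r r) else Xn r (k + 1 - 1)) = _
    rw [if_neg (by omega), show k + 1 - 1 = k from by omega]
  have h2 : famOf (pushArgs r) 0 = -(sumXn r r) := by
    rw [famOf_lt _ (show 0 < r by omega)]
    show (if (0:ℕ) = 0 then -(sumXn r r) else _) = _
    rw [if_pos rfl]
  rw [Finset.sum_congr rfl h1, h2]
  have h3 : sumXn r r = sumXn r (r - 1) + Xn r (r - 1) := by
    have := sumXn_succ r (r - 1)
    rw [show r - 1 + 1 = r by omega] at this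
    exact this
  have h4 : ∑ k ∈ range (r - 1), Xn r k = sumXn r (r - 1) := rfl
  rw [h4, h3]
  ring

lemma good_pushArgs {r : ℕ} (hr : 1 ≤ r) : Good (pushArgs r) := by
  apply good_of_inv (pushInvArgs r)
  intro m
  show aeval (R := ℚ) (pushInvArgs r) (pushArgs r m) = X m
  unfold pushArgs
  have hx : Xn r m.val = X m := Xn_val m
  by_cases hm : m.val = 0
  · rw [if_pos hm, map_neg, aeval_sumXn, sum_famOf_pushInv hr, neg_neg,
      show (0:ℕ) = m.val from hm.symm, hx]
  · rw [if_neg hm, aeval_Xn, famOf_lt _ (show m.val - 1 < r by omega)]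
    show (if m.val - 1 = r - 1 then -(sumXn r r) else Xn r (m.val - 1 + 1)) = _
    rw [if_neg (by omega), show m.val - 1 + 1 = m.val by omega, hx]

lemma good_pushInvArgs {r : ℕ} (hr : 1 ≤ r) : Good (pushInvArgs r) := by
  apply good_of_inv (pushArgs r)
  intro m
  show aeval (R := ℚ) (pushArgs r) (pushInvArgs r m) = X m
  unfold pushInvArgs
  have hx : Xn r m.val = X m := Xn_val m
  by_cases hm : m.val = r - 1
  · rw [if_pos hm, map_neg, aeval_sumXn, sum_famOf_push hr, neg_neg,
      show r - 1 = m.val from hm.symm, hx]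
  · rw [if_neg hm, aeval_Xn, famOf_lt _ (show m.val + 1 < r by omega)]
    show (if m.val + 1 = 0 then -(sumXn r r) else Xn r (m.val + 1 - 1)) = _
    rw [if_neg (by omega), show m.val + 1 - 1 = m.val by omega, hx]

lemma good_sigArgs {r : ℕ} (hr : 1 ≤ r) : Good (sigArgs r) := by
  apply good_of_inv (sigArgs r)
  intro m
  have hx : Xn r m.val = X m := Xn_val m
  have h0 : famOf (sigArgs r) 0 = -(Xn r 0) := by
    rw [famOf_lt _ (show 0 < r by omega)]
    show (if (0:ℕ) = 0 then -(Xn r 0) else _) = _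
    rw [if_pos rfl]
  show aeval (R := ℚ) (sigArgs r) (sigArgs r m) = X m
  rw [show sigArgs r m = if m.val = 0 then -(Xn r 0) else Xn r m.val - Xn r 0 from rfl]
  by_cases hm : m.val = 0
  · rw [if_pos hm, map_neg, aeval_Xn, h0, neg_neg, show (0:ℕ) = m.val from hm.symm, hx]
  · rw [if_neg hm, map_sub, aeval_Xn, aeval_Xn, h0, famOf_lt _ m.isLt]
    show (if m.val = 0 then -(Xn r 0) else Xn r m.val - Xn r 0) - _ = _
    rw [if_neg hm, hx]
    ring

lemma addmod_eq {r m j : ℕ} (hm : m < r) : ((m + j) % r + (r - j % r)) % r = m := by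
  have hr : 0 < r := by omega
  have h1 : (m + j) % r = (m + j % r) % r := by
    rw [Nat.add_mod, Nat.mod_eq_of_lt hm]
  have ha : j % r < r := Nat.mod_lt _ hr
  set a := j % r with hadef
  by_cases h : m + a < r
  · rw [h1, Nat.mod_eq_of_lt h, show m + a + (r - a) = m + r by omega,
      Nat.add_mod_right, Nat.mod_eq_of_lt hm]
  · have h2 : (m + a) % r = m + a - r := by
      rw [Nat.mod_eq_sub_mod (by omega), Nat.mod_eq_of_lt (by omega)]
    rw [h1, h2, show m + a - r + (r - a) = m by omega, Nat.mod_eq_of_lt hm]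

lemma good_rotFam {r : ℕ} (hr : 1 ≤ r) (j : ℕ) : Good (rotFam r j) := by
  apply good_of_inv (rotFam r (r - j % r))
  intro m
  show aeval (R := ℚ) (rotFam r (r - j % r)) (Xn r ((m.val + j) % r)) = X m
  rw [aeval_Xn, famOf_lt _ (Nat.mod_lt _ (by omega))]
  show Xn r (((m.val + j) % r + (r - j % r)) % r) = X m
  rw [addmod_eq m.isLt, Xn_val]

lemma good_circArgs {r : ℕ} (hr : 1 ≤ r) : Good (circArgs r) := by
  apply good_of_inv (fun m => if m.val = 0 then Xn r (r - 1) else Xn r (m.val - 1))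
  intro m
  show aeval (R := ℚ) _ (circArgs r m) = X m
  unfold circArgs
  have hx : Xn r m.val = X m := Xn_val m
  by_cases hm : m.val = r - 1
  · rw [if_pos hm, aeval_Xn, famOf_lt _ (show 0 < r by omega)]
    show (if (0:ℕ) = 0 then Xn r (r - 1) else _) = _
    rw [if_pos rfl, show r - 1 = m.val from hm.symm, hx]
  · rw [if_neg hm, aeval_Xn, famOf_lt _ (show m.val + 1 < r by omega)]
    show (if m.val + 1 = 0 then Xn r (r - 1) else Xn r (m.val + 1 - 1)) = _
    rw [if_neg (by omega), show m.val + 1 - 1 = m.val by omega, hx]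

lemma good_sh1Args {r i : ℕ} (hi : 1 ≤ i) (hir : i ≤ r) : Good (sh1Args r i) := by
  apply good_of_inv (fun m => if m.val = 0 then Xn r (i - 1) else
    if m.val < i then Xn r (m.val - 1) else Xn r m.val)
  intro m
  show aeval (R := ℚ) _ (sh1Args r i m) = X m
  unfold sh1Args
  have hx : Xn r m.val = X m := Xn_val m
  by_cases h1 : m.val + 1 < i
  · rw [if_pos h1, aeval_Xn, famOf_lt _ (show m.val + 1 < r by omega)]
    show (if m.val + 1 = 0 then _ else if m.val + 1 < i then Xn r (m.val + 1 - 1) else _) = _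
    rw [if_neg (by omega), if_pos h1, show m.val + 1 - 1 = m.val by omega, hx]
  · rw [if_neg h1]
    by_cases h2 : m.val + 1 = i
    · rw [if_pos h2, aeval_Xn, famOf_lt _ (show 0 < r by omega)]
      show (if (0:ℕ) = 0 then Xn r (i - 1) else _) = _
      rw [if_pos rfl, show i - 1 = m.val by omega, hx]
    · rw [if_neg h2, aeval_Xn, famOf_lt _ m.isLt]
      show (if m.val = 0 then _ else if m.val < i then _ else Xn r m.val) = _
      rw [if_neg (by omega), if_neg (by omega), hx]

lemma good_fayArgs {r i : ℕ} (hi : 1 ≤ i) (hir : i ≤ r) : Good (fayArgs r i) := by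
  set g : Fin r → MPoly r := fun m => if m.val = 0 then -(sumXn r i) else
    if m.val < i then Xn r (m.val - 1) else
    if m.val = i then Xn r (i - 1) + Xn r i else Xn r m.val with hg
  have hsum : aeval (R := ℚ) g (sumXn r i) = -(Xn r (i - 1)) := by
    rw [aeval_sumXn]
    have h := Finset.sum_range_succ' (famOf g) (i - 1)
    rw [show i - 1 + 1 = i by omega] at h
    rw [h]
    have h1 : ∀ k ∈ range (i - 1), famOf g (k + 1) = Xn r k := fun k hk => by
      rw [Finset.mem_range] at hk
      rw [famOf_lt _ (show k + 1 < r by omega)]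
      show (if k + 1 = 0 then _ else if k + 1 < i then Xn r (k + 1 - 1) else _) = _
      rw [if_neg (by omega), if_pos (by omega), show k + 1 - 1 = k by omega]
    have h2 : famOf g 0 = -(sumXn r i) := by
      rw [famOf_lt _ (show 0 < r by omega)]
      show (if (0:ℕ) = 0 then -(sumXn r i) else _) = _
      rw [if_pos rfl]
    rw [Finset.sum_congr rfl h1, h2]
    have h3 : ∑ k ∈ range (i - 1), Xn r k = sumXn r (i - 1) := rfl
    have h4 : sumXn r i = sumXn r (i - 1) + Xn r (i - 1) := by
      have := sumXn_succ r (i - 1)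
      rw [show i - 1 + 1 = i by omega] at this
      exact this
    rw [h3, h4]
    ring
  apply good_of_inv g
  intro m
  show aeval (R := ℚ) g (fayArgs r i m) = X m
  unfold fayArgs
  have hx : Xn r m.val = X m := Xn_val m
  by_cases h1 : m.val + 1 < i
  · rw [if_pos h1, aeval_Xn, famOf_lt _ (show m.val + 1 < r by omega)]
    show (if m.val + 1 = 0 then _ else if m.val + 1 < i then Xn r (m.val + 1 - 1) else _) = _
    rw [if_neg (by omega), if_pos h1, show m.val + 1 - 1 = m.val by omega, hx]
  · rw [if_neg h1]
    by_cases h2 : m.val + 1 = i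
    · rw [if_pos h2, map_neg, hsum, neg_neg, show i - 1 = m.val by omega, hx]
    · rw [if_neg h2]
      by_cases h3 : m.val = i
      · rw [if_pos h3]
        have h5 : sumXn r (i + 1) = sumXn r i + Xn r i := sumXn_succ r i
        rw [h5, map_add, hsum, aeval_Xn, famOf_lt _ (show i < r by omega)]
        show -(Xn r (i - 1)) + (if i = 0 then _ else if i < i then _ else
          if i = i then Xn r (i - 1) + Xn r i else _) = _
        rw [if_neg (by omega), if_neg (by omega), if_pos rfl, show i = m.val from h3.symm, hx]
        ring
      · rw [if_neg h3, aeval_Xn, famOf_lt _ m.isLt]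
        show (if m.val = 0 then _ else if m.val < i then _ else
          if m.val = i then _ else Xn r m.val) = _
        rw [if_neg (by omega), if_neg (by omega), if_neg h3, hx]

end Thm13

namespace Thm13
open MvPolynomial Finset

/-! ### Window (iterated push) machinery -/

def famSum {r : ℕ} (L : Fin r → MPoly r) : MPoly r := ∑ m, L m

/-- Extended `(r+1)`-periodic tuple attached to a family: position `0` carries
`−(sum of the family)`, positions `1,…,r` carry the family values. -/
def extF {r : ℕ} (L : Fin r → MPoly r) (t : ℕ) : MPoly r :=
  if t % (r + 1) = 0 then -(famSum L) else famOf L (t % (r + 1) - 1)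

/-- The family read in the window `[k+1, k+r]` of the extended tuple. -/
def windowF {r : ℕ} (L : Fin r → MPoly r) (k : ℕ) : Fin r → MPoly r :=
  fun m => extF L (m.val + 1 + k)

lemma extF_period {r : ℕ} (L : Fin r → MPoly r) (t : ℕ) :
    extF L (t + (r + 1)) = extF L t := by
  unfold extF
  rw [Nat.add_mod_right]

lemma extF_pos {r : ℕ} (L : Fin r → MPoly r) {t : ℕ} (h1 : 1 ≤ t) (h2 : t ≤ r) :
    extF L t = famOf L (t - 1) := by
  unfold extF
  rw [Nat.mod_eq_of_lt (by omega), if_neg (by omega)]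

lemma extF_zero {r : ℕ} (L : Fin r → MPoly r) : extF L 0 = -(famSum L) := by
  unfold extF
  rw [Nat.zero_mod, if_pos rfl]

lemma windowF_zero {r : ℕ} (L : Fin r → MPoly r) : windowF L 0 = L := by
  funext m
  show extF L (m.val + 1 + 0) = L m
  rw [Nat.add_zero, extF_pos L (by omega) (by omega)]
  rw [famOf_lt _ (show m.val + 1 - 1 < r by omega)]
  congr 1

lemma famSum_eq_range {r : ℕ} (L : Fin r → MPoly r) :
    famSum L = ∑ k ∈ range r, famOf L k := by
  unfold famSum
  rw [← Fin.sum_univ_eq_sum_range (fun k => famOf L k) r]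
  exact Finset.sum_congr rfl fun m _ => (famOf_lt L m.isLt).symm

/-- The sum of the extended tuple over a full period vanishes. -/
lemma extF_period_sum {r : ℕ} (L : Fin r → MPoly r) (k : ℕ) :
    ∑ t ∈ range (r + 1), extF L (t + k) = 0 := by
  induction k with
  | zero =>
    have h := Finset.sum_range_succ' (fun t => extF L t) r
    simp only [Nat.add_zero]
    rw [h, extF_zero]
    have h1 : ∀ t ∈ range r, extF L (t + 1) = famOf L t := fun t ht => by
      rw [Finset.mem_range] at ht
      rw [extF_pos L (by omega) (by omega), show t + 1 - 1 = t from by omega]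
    rw [Finset.sum_congr rfl h1, ← famSum_eq_range]
    ring
  | succ k ih =>
    have hA : ∑ t ∈ range (r + 2), extF L (t + k)
        = (∑ t ∈ range (r + 1), extF L (t + k)) + extF L (r + 1 + k) := by
      rw [Finset.sum_range_succ]
    have hB : ∑ t ∈ range (r + 2), extF L (t + k)
        = (∑ t ∈ range (r + 1), extF L (t + 1 + k)) + extF L (0 + k) := by
      rw [Finset.sum_range_succ' (fun t => extF L (t + k)) (r + 1)]
    have hper : extF L (r + 1 + k) = extF L (0 + k) := by
      rw [show r + 1 + k = 0 + k + (r + 1) by omega, extF_period]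
    have h2 : ∑ t ∈ range (r + 1), extF L (t + 1 + k)
        = ∑ t ∈ range (r + 1), extF L (t + k) := by
      have h3 := hA.symm.trans hB
      rw [hper] at h3
      exact (add_right_cancel h3).symm
    have h4 : ∑ t ∈ range (r + 1), extF L (t + (k + 1))
        = ∑ t ∈ range (r + 1), extF L (t + 1 + k) :=
      Finset.sum_congr rfl fun t _ => by rw [show t + (k + 1) = t + 1 + k by omega]
    rw [h4, h2, ih]

lemma window_sum {r : ℕ} (L : Fin r → MPoly r) (k : ℕ) :
    ∑ t ∈ range r, extF L (t + 1 + k) = -(extF L k) := by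
  have h := Finset.sum_range_succ' (fun t => extF L (t + k)) r
  rw [extF_period_sum L k, Nat.zero_add] at h
  exact eq_neg_of_add_eq_zero_left h.symm

/-- The inverse push composed with push is the identity family. -/
lemma pushInv_push {r : ℕ} (hr : 1 ≤ r) (m : Fin r) :
    aeval (R := ℚ) (pushInvArgs r) (pushArgs r m) = X m := by
  unfold pushArgs
  have hx : Xn r m.val = X m := Xn_val m
  by_cases hm : m.val = 0
  · rw [if_pos hm, map_neg, aeval_sumXn, sum_famOf_pushInv hr, neg_neg,
      show (0:ℕ) = m.val from hm.symm, hx]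
  · rw [if_neg hm, aeval_Xn, famOf_lt _ (show m.val - 1 < r by omega)]
    show (if m.val - 1 = r - 1 then -(sumXn r r) else Xn r (m.val - 1 + 1)) = _
    rw [if_neg (by omega), show m.val - 1 + 1 = m.val by omega, hx]

/-- Moving the window by one is composition with the inverse push. -/
lemma window_succ {r : ℕ} (hr : 1 ≤ r) (L : Fin r → MPoly r) (k : ℕ) :
    windowF L (k + 1) = famComp (windowF L k) (pushInvArgs r) := by
  funext m
  show extF L (m.val + 1 + (k + 1)) = aeval (R := ℚ) (windowF L k) (pushInvArgs r m)
  unfold pushInvArgs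
  by_cases hm : m.val = r - 1
  · rw [if_pos hm, map_neg, aeval_sumXn]
    have h1 : ∀ t ∈ range r, famOf (windowF L k) t = extF L (t + 1 + k) := fun t ht => by
      rw [Finset.mem_range] at ht
      rw [famOf_lt _ ht]
      rfl
    rw [Finset.sum_congr rfl h1, window_sum L k, neg_neg,
      show m.val + 1 + (k + 1) = k + (r + 1) by omega, extF_period]
  · rw [if_neg hm, aeval_Xn, famOf_lt _ (show m.val + 1 < r by omega)]
    show _ = extF L (m.val + 1 + 1 + k)
    congr 1
    omega

/-- Key lemma: for a push-invariant element, substitution along any window of a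
good family agrees with substitution along the family itself. -/
lemma msubst_windowF {r : ℕ} (hr : 1 ≤ r) {x : MFrac r} (hx : msubst (pushArgs r) x = x)
    {L : Fin r → MPoly r} (hL : Good L) (k : ℕ) :
    Good (windowF L k) ∧ msubst (windowF L k) x = msubst L x := by
  have hpi : Good (pushInvArgs r) := good_pushInvArgs hr
  have hxpi : msubst (pushInvArgs r) x = x := by
    calc msubst (pushInvArgs r) x
        = msubst (pushInvArgs r) (msubst (pushArgs r) x) := by rw [hx]
      _ = msubst (famComp (pushInvArgs r) (pushArgs r)) x :=
          msubst_msubst hpi (good_pushArgs hr) x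
      _ = x := by
          rw [show famComp (pushInvArgs r) (pushArgs r) = X from funext (pushInv_push hr)]
          exact msubst_X x
  induction k with
  | zero => rw [windowF_zero]; exact ⟨hL, rfl⟩
  | succ k ih =>
    refine ⟨by rw [window_succ hr]; exact good_comp ih.1 hpi, ?_⟩
    rw [window_succ hr, ← msubst_msubst ih.1 hpi x, hxpi, ih.2]

/-! ### Closed form for circ iterates -/

lemma rotFam_zero {r : ℕ} : rotFam r 0 = X := by
  funext m
  show Xn r ((m.val + 0) % r) = X m
  rw [Nat.add_zero, Nat.mod_eq_of_lt m.isLt, Xn_val]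

lemma circ_iterate {r : ℕ} (hr : 1 ≤ r) (A : Mould) (j : ℕ) :
    (circM^[j] A) r = msubst (rotFam r j) (A r) := by
  induction j generalizing A with
  | zero =>
    rw [Function.iterate_zero, id, rotFam_zero, msubst_X]
  | succ j ih =>
    rw [Function.iterate_succ_apply, ih (circM A)]
    show msubst (rotFam r j) (msubst (circArgs r) (A r)) = _
    rw [msubst_msubst (good_rotFam hr j) (good_circArgs hr)]
    congr 1
    funext m
    show aeval (R := ℚ) (rotFam r j) (circArgs r m) = Xn r ((m.val + (j + 1)) % r)
    unfold circArgs
    by_cases hm : m.val = r - 1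
    · rw [if_pos hm, aeval_Xn, famOf_lt _ (show 0 < r by omega)]
      show Xn r ((0 + j) % r) = _
      rw [Nat.zero_add, show m.val + (j + 1) = r + j by omega, Nat.add_mod_left]
    · rw [if_neg hm, aeval_Xn, famOf_lt _ (show m.val + 1 < r by omega)]
      show Xn r ((m.val + 1 + j) % r) = _
      congr 2
      omega

end Thm13

namespace Thm13
open MvPolynomial Finset

/-! ### Value computations for composite families -/

lemma famComp_swap_apply {r : ℕ} (G : Fin r → MPoly r) (m : Fin r) :
    famComp G (swapArgs r) m = famOf G (r - 1 - m.val) - famOf G (r - m.val) := by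
  show aeval (R := ℚ) G (swapArgs r m) = _
  rw [swapArgs_apply, map_sub, aeval_Xn, aeval_Xn]

lemma sum_swapArgs {r : ℕ} (hr : 1 ≤ r) : ∑ m : Fin r, swapArgs r m = Xn r 0 := by
  have h : ∑ m : Fin r, swapArgs r m
      = ∑ k ∈ range r, (Xn r (r - 1 - k) - Xn r (r - k)) :=
    Fin.sum_univ_eq_sum_range (fun k => Xn r (r - 1 - k) - Xn r (r - k)) r
  rw [h, sum_swap_tele r r (le_refl r), Nat.sub_self]

lemma famSum_comp_swap {r : ℕ} (hr : 1 ≤ r) (G : Fin r → MPoly r) :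
    famSum (famComp G (swapArgs r)) = famOf G 0 := by
  unfold famSum
  have h : ∑ m : Fin r, famComp G (swapArgs r) m
      = aeval (R := ℚ) G (∑ m : Fin r, swapArgs r m) := (map_sum _ _ _).symm
  rw [h, sum_swapArgs hr, aeval_Xn]

lemma sig_val {r t : ℕ} (ht : t < r) :
    famOf (sigArgs r) t = if t = 0 then -(Xn r 0) else Xn r t - Xn r 0 := by
  rw [famOf_lt _ ht]; rfl

lemma sh1_val {r i k : ℕ} (hk : k < r) :
    famOf (sh1Args r i) k = if k + 1 < i then Xn r (k + 1) else if k + 1 = i then Xn r 0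
      else Xn r k := by
  rw [famOf_lt _ hk]; rfl

lemma fay_val {r i k : ℕ} (hk : k < r) :
    famOf (fayArgs r i) k = if k + 1 < i then Xn r (k + 1) else if k + 1 = i
      then -(sumXn r i) else if k = i then sumXn r (i + 1) else Xn r k := by
  rw [famOf_lt _ hk]; rfl

lemma rot_val {r j k : ℕ} (hk : k < r) :
    famOf (rotFam r j) k = Xn r ((k + j) % r) := by
  rw [famOf_lt _ hk]; rfl

lemma vbar_val {r k : ℕ} (hk : k < r) :
    famOf (vbarArgs r) k = sumXn r (r - k) := by
  rw [famOf_lt _ hk]; rfl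

/-- `H_j = σ ∘ rot_j ∘ swap` (the `j`-th circ term of the circ-sum, composed
with `σ`, expressed on the `M`-side). -/
def Hfam (r j : ℕ) : Fin r → MPoly r :=
  famComp (sigArgs r) (famComp (rotFam r j) (swapArgs r))

/-- `Q_j = vbar ∘ rot_j ∘ swap`. -/
def Qfam (r j : ℕ) : Fin r → MPoly r :=
  famComp (vbarArgs r) (famComp (rotFam r j) (swapArgs r))

lemma comp_comp_swap_val {r : ℕ} (hr : 1 ≤ r) (G : Fin r → MPoly r) (j : ℕ) {k : ℕ}
    (hk : k < r) :
    famOf (famComp G (famComp (rotFam r j) (swapArgs r))) k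
      = famOf G ((r - 1 - k + j) % r) - (if k = 0 then 0 else famOf G ((r - k + j) % r)) := by
  rw [famOf_lt _ hk]
  show aeval (R := ℚ) G (famComp (rotFam r j) (swapArgs r) ⟨k, hk⟩) = _
  rw [famComp_swap_apply, map_sub, famOf_lt (rotFam r j) (show r - 1 - k < r by omega)]
  rw [show rotFam r j ⟨r - 1 - k, show r - 1 - k < r by omega⟩
    = Xn r ((r - 1 - k + j) % r) from rfl, aeval_Xn]
  by_cases hk0 : k = 0
  · rw [if_pos hk0, famOf_ge (rotFam r j) (show r ≤ r - k by omega), map_zero]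
  · rw [if_neg hk0, famOf_lt (rotFam r j) (show r - k < r by omega)]
    rw [show rotFam r j ⟨r - k, show r - k < r by omega⟩
      = Xn r ((r - k + j) % r) from rfl, aeval_Xn]

lemma famSum_Hfam {r : ℕ} (hr : 1 ≤ r) (j : ℕ) :
    famSum (Hfam r j) = famOf (sigArgs r) (j % r) := by
  unfold Hfam
  rw [← famComp_assoc, famSum_comp_swap hr, famOf_lt _ (show 0 < r by omega)]
  show aeval (R := ℚ) (sigArgs r) (rotFam r j ⟨0, show 0 < r by omega⟩) = _
  rw [show rotFam r j ⟨0, show 0 < r by omega⟩ = Xn r ((0 + j) % r) from rfl, aeval_Xn,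
    Nat.zero_add]

lemma famSum_Qfam {r : ℕ} (hr : 1 ≤ r) (j : ℕ) :
    famSum (Qfam r j) = famOf (vbarArgs r) (j % r) := by
  unfold Qfam
  rw [← famComp_assoc, famSum_comp_swap hr, famOf_lt _ (show 0 < r by omega)]
  show aeval (R := ℚ) (vbarArgs r) (rotFam r j ⟨0, show 0 < r by omega⟩) = _
  rw [show rotFam r j ⟨0, show 0 < r by omega⟩ = Xn r ((0 + j) % r) from rfl, aeval_Xn,
    Nat.zero_add]

lemma extF_top {r : ℕ} (L : Fin r → MPoly r) : extF L (r + 1) = -(famSum L) := by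
  rw [show r + 1 = 0 + (r + 1) from by omega, extF_period, extF_zero]

/-! ### Arithmetic helpers -/

lemma mod_small {a r : ℕ} (h : a < r) : a % r = a := Nat.mod_eq_of_lt h

lemma mod_big {a r : ℕ} (h1 : r ≤ a) (h2 : a < 2 * r) : a % r = a - r := by
  rw [Nat.mod_eq_sub_mod h1, Nat.mod_eq_of_lt (by omega)]

lemma addmod_modr {a i r : ℕ} (hr : 0 < r) : (a + i % r) % r = (a + i) % r := by
  conv_rhs => rw [Nat.add_mod]
  conv_lhs => rw [Nat.add_mod]
  rw [Nat.mod_eq_of_lt (Nat.mod_lt i hr)]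

lemma sig_modi {r i : ℕ} (hi : 1 ≤ i) (hir : i ≤ r) (hr : 1 ≤ r) :
    famOf (sigArgs r) (i % r) = Xn r i - Xn r 0 := by
  by_cases h : i < r
  · rw [mod_small h, sig_val h, if_neg (by omega)]
  · have hi' : i = r := by omega
    rw [hi', Nat.mod_self, sig_val (show 0 < r by omega), if_pos rfl, Xn_ge (le_refl r)]
    ring

/-! ### Matching lemma A -/

lemma sh1_at_top {r i : ℕ} (hi : 1 ≤ i) (hir : i ≤ r) :
    famOf (sh1Args r i) i = Xn r i := by
  by_cases h : i < r
  · rw [sh1_val h, if_neg (by omega), if_neg (by omega)]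
  · rw [famOf_ge _ (by omega), Xn_ge (by omega)]

lemma matchA {r i : ℕ} (hi : 1 ≤ i) (hir : i ≤ r) :
    famComp (sh1Args r i) (swapArgs r) = windowF (Hfam r (i % r)) i := by
  have hr : 1 ≤ r := le_trans hi hir
  have hr0 : 0 < r := hr
  funext m
  rw [famComp_swap_apply]
  show _ = extF (Hfam r (i % r)) (m.val + 1 + i)
  rcases Nat.lt_trichotomy m.val (r - i) with hm | hm | hm
  · -- Case 1 : m < r - i  (so i < r)
    have hilt : i < r := by omega
    rw [extF_pos _ (by omega) (by omega), show m.val + 1 + i - 1 = m.val + i from by omega]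
    unfold Hfam
    rw [comp_comp_swap_val hr _ _ (show m.val + i < r by omega), if_neg (by omega)]
    rw [show r - 1 - (m.val + i) + i % r = r - 1 - m.val - i + i % r from by omega,
      addmod_modr hr0, show r - 1 - m.val - i + i = r - 1 - m.val from by omega,
      mod_small (show r - 1 - m.val < r by omega),
      show r - (m.val + i) + i % r = r - m.val - i + i % r from by omega,
      addmod_modr hr0, show r - m.val - i + i = r - m.val from by omega]
    rw [sig_val (show r - 1 - m.val < r by omega), if_neg (show ¬(r - 1 - m.val = 0) by omega)]
    by_cases hm0 : m.val = 0
    · rw [hm0, show r - (0:ℕ) = r from by omega, Nat.mod_self,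
        sig_val hr0, if_pos rfl]
      rw [sh1_val (show r - 1 - (0:ℕ) < r by omega), famOf_ge _ (le_refl r)]
      rw [if_neg (show ¬(r - 1 - 0 + 1 < i) by omega), if_neg (show ¬(r - 1 - 0 + 1 = i) by omega)]
      ring
    · rw [mod_small (show r - m.val < r by omega),
        sig_val (show r - m.val < r by omega), if_neg (show ¬(r - m.val = 0) by omega)]
      rw [sh1_val (show r - 1 - m.val < r by omega), sh1_val (show r - m.val < r by omega)]
      rw [if_neg (show ¬(r - 1 - m.val + 1 < i) by omega),
        if_neg (show ¬(r - 1 - m.val + 1 = i) by omega),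
        if_neg (show ¬(r - m.val + 1 < i) by omega),
        if_neg (show ¬(r - m.val + 1 = i) by omega)]
      ring
  · -- Case 2 : m = r - i
    rw [show m.val + 1 + i = r + 1 from by omega, extF_top, famSum_Hfam hr,
      mod_small (Nat.mod_lt i hr0), sig_modi hi hir hr]
    rw [show r - 1 - m.val = i - 1 from by omega, show r - m.val = i from by omega]
    rw [sh1_val (show i - 1 < r by omega), if_neg (show ¬(i - 1 + 1 < i) by omega),
      if_pos (show i - 1 + 1 = i from by omega), sh1_at_top hi hir]
    ring
  · -- Case 3 : m > r - i  (so i ≥ 2)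
    have hm1 : r - i + 1 ≤ m.val := by omega
    have hige : 2 ≤ i := by omega
    by_cases hm2 : m.val = r - i + 1
    · -- Case 3a
      rw [show m.val + 1 + i = 1 + (r + 1) from by omega, extF_period,
        extF_pos _ (by omega) (by omega), show (1:ℕ) - 1 = 0 from rfl]
      unfold Hfam
      rw [comp_comp_swap_val hr _ _ hr0, if_pos rfl]
      rw [show r - 1 - 0 + i % r = r - 1 + i % r from by omega, addmod_modr hr0,
        mod_big (show r ≤ r - 1 + i by omega) (show r - 1 + i < 2 * r by omega),
        show r - 1 + i - r = i - 1 from by omega]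
      rw [sig_val (show i - 1 < r by omega), if_neg (show ¬(i - 1 = 0) by omega)]
      rw [show r - 1 - m.val = i - 2 from by omega, show r - m.val = i - 1 from by omega]
      rw [sh1_val (show i - 2 < r by omega), if_pos (show i - 2 + 1 < i from by omega),
        sh1_val (show i - 1 < r by omega), if_neg (show ¬(i - 1 + 1 < i) by omega),
        if_pos (show i - 1 + 1 = i from by omega), show i - 2 + 1 = i - 1 from by omega]
      ring
    · -- Case 3b : m ≥ r - i + 2
      have hm3 : r - i + 2 ≤ m.val := by omega
      rw [show m.val + 1 + i = (m.val + i - r) + (r + 1) from by omega, extF_period,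
        extF_pos _ (by omega) (by omega)]
      unfold Hfam
      rw [comp_comp_swap_val hr _ _ (show m.val + i - r - 1 < r by omega),
        if_neg (show ¬(m.val + i - r - 1 = 0) by omega)]
      rw [show r - 1 - (m.val + i - r - 1) + i % r = 2 * r - m.val - i + i % r from by omega,
        addmod_modr hr0, show 2 * r - m.val - i + i = 2 * r - m.val from by omega,
        mod_big (show r ≤ 2 * r - m.val by omega) (show 2 * r - m.val < 2 * r by omega),
        show 2 * r - m.val - r = r - m.val from by omega]
      rw [show r - (m.val + i - r - 1) + i % r = 2 * r - m.val + 1 - i + i % r from by omega,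
        addmod_modr hr0, show 2 * r - m.val + 1 - i + i = 2 * r - m.val + 1 from by omega,
        mod_big (show r ≤ 2 * r - m.val + 1 by omega)
          (show 2 * r - m.val + 1 < 2 * r by omega),
        show 2 * r - m.val + 1 - r = r - m.val + 1 from by omega]
      rw [sig_val (show r - m.val < r by omega), if_neg (show ¬(r - m.val = 0) by omega),
        sig_val (show r - m.val + 1 < r by omega),
        if_neg (show ¬(r - m.val + 1 = 0) by omega)]
      rw [sh1_val (show r - 1 - m.val < r by omega),
        if_pos (show r - 1 - m.val + 1 < i from by omega),
        sh1_val (show r - m.val < r by omega),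
        if_pos (show r - m.val + 1 < i from by omega),
        show r - 1 - m.val + 1 = r - m.val from by omega]
      ring

end Thm13

namespace Thm13
open MvPolynomial Finset

/-! ### Matching lemma B -/

lemma matchB {r i : ℕ} (hi : 1 ≤ i) (hir : i ≤ r) :
    fayArgs r i = windowF (Qfam r (r - i)) (r - i + 1) := by
  have hr : 1 ≤ r := le_trans hi hir
  have hr0 : 0 < r := hr
  funext m
  show fayArgs r i m = extF (Qfam r (r - i)) (m.val + 1 + (r - i + 1))
  have hfay : fayArgs r i m = (if m.val + 1 < i then Xn r (m.val + 1)
      else if m.val + 1 = i then -(sumXn r i)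
      else if m.val = i then sumXn r (i + 1) else Xn r m.val) := rfl
  rcases Nat.lt_trichotomy m.val (i - 1) with hm | hm | hm
  · -- C1 : m < i - 1, term is u_{m+2}
    rw [hfay, if_pos (by omega)]
    rw [extF_pos _ (by omega) (by omega),
      show m.val + 1 + (r - i + 1) - 1 = m.val + r - i + 1 from by omega]
    unfold Qfam
    rw [comp_comp_swap_val hr _ _ (show m.val + r - i + 1 < r by omega),
      if_neg (show ¬(m.val + r - i + 1 = 0) by omega)]
    rw [show r - 1 - (m.val + r - i + 1) + (r - i) = r - m.val - 2 from by omega,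
      mod_small (show r - m.val - 2 < r by omega),
      show r - (m.val + r - i + 1) + (r - i) = r - m.val - 1 from by omega,
      mod_small (show r - m.val - 1 < r by omega)]
    rw [vbar_val (show r - m.val - 2 < r by omega),
      vbar_val (show r - m.val - 1 < r by omega),
      show r - (r - m.val - 2) = m.val + 2 from by omega,
      show r - (r - m.val - 1) = m.val + 1 from by omega,
      show m.val + 2 = (m.val + 1) + 1 from rfl, sumXn_succ]
    ring
  · -- C2 : m = i - 1, term is -ū_i
    rw [hfay, if_neg (by omega), if_pos (by omega)]
    rw [show m.val + 1 + (r - i + 1) = r + 1 from by omega, extF_top, famSum_Qfam hr,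
      mod_small (show r - i < r by omega), vbar_val (show r - i < r by omega),
      show r - (r - i) = i from by omega]
  · -- m > i - 1, i.e. m ≥ i
    by_cases hmi : m.val = i
    · -- C3 : term is ū_{i+1}; here i < r
      rw [hfay, if_neg (by omega), if_neg (by omega), if_pos hmi]
      rw [show m.val + 1 + (r - i + 1) = 1 + (r + 1) from by omega, extF_period,
        extF_pos _ (by omega) (by omega), show (1:ℕ) - 1 = 0 from rfl]
      unfold Qfam
      rw [comp_comp_swap_val hr _ _ hr0, if_pos rfl]
      rw [show r - 1 - 0 + (r - i) = 2 * r - 1 - i from by omega,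
        mod_big (show r ≤ 2 * r - 1 - i by omega) (show 2 * r - 1 - i < 2 * r by omega),
        show 2 * r - 1 - i - r = r - 1 - i from by omega]
      rw [vbar_val (show r - 1 - i < r by omega),
        show r - (r - 1 - i) = i + 1 from by omega]
      ring
    · -- C4 : m > i, term is u_{m+1}
      have hmgt : i < m.val := by omega
      rw [hfay, if_neg (by omega), if_neg (by omega), if_neg hmi]
      rw [show m.val + 1 + (r - i + 1) = (m.val - i + 1) + (r + 1) from by omega, extF_period,
        extF_pos _ (by omega) (by omega),
        show m.val - i + 1 - 1 = m.val - i from by omega]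
      unfold Qfam
      rw [comp_comp_swap_val hr _ _ (show m.val - i < r by omega),
        if_neg (show ¬(m.val - i = 0) by omega)]
      rw [show r - 1 - (m.val - i) + (r - i) = 2 * r - 1 - m.val from by omega,
        mod_big (show r ≤ 2 * r - 1 - m.val by omega)
          (show 2 * r - 1 - m.val < 2 * r by omega),
        show 2 * r - 1 - m.val - r = r - 1 - m.val from by omega,
        show r - (m.val - i) + (r - i) = 2 * r - m.val from by omega,
        mod_big (show r ≤ 2 * r - m.val by omega) (show 2 * r - m.val < 2 * r by omega),
        show 2 * r - m.val - r = r - m.val from by omega]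
      rw [vbar_val (show r - 1 - m.val < r by omega), vbar_val (show r - m.val < r by omega),
        show r - (r - 1 - m.val) = m.val + 1 from by omega,
        show r - (r - m.val) = m.val from by omega, show m.val + 1 = m.val + 1 from rfl,
        sumXn_succ]
      ring

/-- The `j = 0` circ composite is the identity substitution. -/
lemma Qfam_zero {r : ℕ} (hr : 1 ≤ r) : Qfam r 0 = X := by
  have hr0 : 0 < r := hr
  funext m
  show Qfam r 0 m = X m
  have h : Qfam r 0 m = famOf (Qfam r 0) m.val := (famOf_lt _ m.isLt).symm
  rw [h]
  unfold Qfam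
  rw [comp_comp_swap_val hr _ _ m.isLt]
  by_cases hm : m.val = 0
  · rw [if_pos hm, hm, show r - 1 - 0 + 0 = r - 1 from by omega,
      mod_small (show r - 1 < r by omega), vbar_val (show r - 1 < r by omega),
      show r - (r - 1) = 1 from by omega, sumXn_one, sub_zero,
      show Xn r 0 = Xn r (m.val) from by rw [hm], Xn_val]
  · rw [if_neg hm, show r - 1 - m.val + 0 = r - 1 - m.val from by omega,
      mod_small (show r - 1 - m.val < r by omega),
      show r - m.val + 0 = r - m.val from by omega,
      mod_small (show r - m.val < r by omega),
      vbar_val (show r - 1 - m.val < r by omega), vbar_val (show r - m.val < r by omega),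
      show r - (r - 1 - m.val) = m.val + 1 from by omega,
      show r - (r - m.val) = m.val from by omega, sumXn_succ]
    rw [Xn_val]
    ring

lemma famSum_windowF {r : ℕ} (L : Fin r → MPoly r) (k : ℕ) :
    famSum (windowF L k) = -(extF L k) := by
  rw [famSum_eq_range]
  have h : ∀ t ∈ range r, famOf (windowF L k) t = extF L (t + 1 + k) := fun t ht => by
    rw [Finset.mem_range] at ht
    rw [famOf_lt _ ht]
    rfl
  rw [Finset.sum_congr rfl h, window_sum]

/-- Prefactor of the `i`-th Fay term. -/
lemma fay_prefactor {r i : ℕ} (hi : 1 ≤ i) (hir : i ≤ r) :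
    aeval (R := ℚ) (fayArgs r i) (sumXn r r)
      = if i = r then -(Xn r 0) else sumXn r r - Xn r 0 := by
  have hr : 1 ≤ r := le_trans hi hir
  have hr0 : 0 < r := hr
  rw [aeval_sumXn, ← famSum_eq_range, matchB hi hir, famSum_windowF,
    extF_pos _ (by omega) (by omega), show r - i + 1 - 1 = r - i from by omega]
  unfold Qfam
  rw [comp_comp_swap_val hr _ _ (show r - i < r by omega)]
  by_cases h : i = r
  · rw [if_pos h, if_pos (by omega)]
    rw [show r - 1 - (r - i) + (r - i) = r - 1 from by omega,
      mod_small (show r - 1 < r by omega), vbar_val (show r - 1 < r by omega),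
      show r - (r - 1) = 1 from by omega, sumXn_one]
    ring
  · rw [if_neg h, if_neg (show ¬(r - i = 0) by omega)]
    rw [show r - 1 - (r - i) + (r - i) = r - 1 from by omega,
      mod_small (show r - 1 < r by omega), vbar_val (show r - 1 < r by omega),
      show r - (r - 1) = 1 from by omega, sumXn_one,
      show r - (r - i) + (r - i) = r from by omega, Nat.mod_self,
      vbar_val hr0, Nat.sub_zero]
    ring

end Thm13

namespace Thm13
open MvPolynomial Finset

variable {r : ℕ}

lemma CS_term (hr : 1 ≤ r) (M : Mould) (j : ℕ) :
    (circM^[j] (swapM M)) r = msubst (famComp (rotFam r j) (swapArgs r)) (M r) := by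
  rw [circ_iterate hr (swapM M) j]
  show msubst (rotFam r j) (msubst (swapArgs r) (M r)) = _
  exact msubst_msubst (good_rotFam hr j) (good_swapArgs hr) (M r)

lemma identityA (hr : 1 ≤ r) (M : Mould) (hpush : PushInvariant M) :
    ∑ i ∈ Icc 1 r, msubst (sh1Args r i) (swapM M r)
      = msubst (sigArgs r) (∑ j ∈ range r, (circM^[j] (swapM M)) r) := by
  have hx : msubst (pushArgs r) (M r) = M r := hpush r hr
  have hgsw := good_swapArgs (r := r) hr
  have hgsig := good_sigArgs (r := r) hr
  set U : ℕ → MFrac r := fun j => msubst (Hfam r j) (M r) with hU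
  have hterm : ∀ i ∈ Icc 1 r, msubst (sh1Args r i) (swapM M r) = U (i % r) := by
    intro i hi
    rw [Finset.mem_Icc] at hi
    show msubst (sh1Args r i) (msubst (swapArgs r) (M r)) = _
    rw [msubst_msubst (good_sh1Args hi.1 hi.2) hgsw, matchA hi.1 hi.2]
    have hH : Good (Hfam r (i % r)) :=
      good_comp hgsig (good_comp (good_rotFam hr _) hgsw)
    exact (msubst_windowF hr hx hH i).2
  have hRHS : msubst (sigArgs r) (∑ j ∈ range r, (circM^[j] (swapM M)) r)
      = ∑ j ∈ range r, U j := by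
    rw [msubst_sum hgsig]
    refine Finset.sum_congr rfl fun j _ => ?_
    rw [CS_term hr M j, msubst_msubst hgsig (good_comp (good_rotFam hr j) hgsw)]
    rfl
  rw [Finset.sum_congr rfl hterm, hRHS]
  refine Finset.sum_bij' (fun a _ => a % r) (fun b _ => if b = 0 then r else b)
    ?_ ?_ ?_ ?_ ?_
  · intro a ha
    rw [Finset.mem_Icc] at ha
    rw [Finset.mem_range]
    exact Nat.mod_lt _ (by omega)
  · intro b hb
    rw [Finset.mem_range] at hb
    rw [Finset.mem_Icc]
    by_cases h : b = 0
    · rw [if_pos h]; omega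
    · rw [if_neg h]; omega
  · intro a ha
    rw [Finset.mem_Icc] at ha
    by_cases h : a = r
    · rw [h, Nat.mod_self, if_pos rfl]
    · have h2 : a % r = a := Nat.mod_eq_of_lt (by omega)
      rw [h2, if_neg (by omega)]
  · intro b hb
    rw [Finset.mem_range] at hb
    by_cases h : b = 0
    · rw [if_pos h, Nat.mod_self, h]
    · rw [if_neg h, Nat.mod_eq_of_lt (by omega)]
  · intro a _
    rfl

lemma equivA (hr2 : 2 ≤ r) (M : Mould) (hpush : PushInvariant M) (c : ℚ) :
    (∑ i ∈ Icc 1 r, msubst (sh1Args r i) (swapM M r) = constF r c)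
      ↔ (∑ j ∈ range r, (circM^[j] (swapM M)) r = constF r c) := by
  have hr : 1 ≤ r := by omega
  have hgsig := good_sigArgs (r := r) hr
  rw [identityA hr M hpush]
  constructor
  · intro h
    apply msubst_injective hgsig
    rw [h, msubst_constF hgsig]
  · intro h
    rw [h, msubst_constF hgsig]

lemma identityB (hr : 1 ≤ r) (M : Mould) (hpush : PushInvariant M) :
    Fay (durM M) r = toF (sumXn r r - Xn r 0)
      * msubst (vbarArgs r) (∑ j ∈ range r, (circM^[j] (swapM M)) r) := by
  have hx : msubst (pushArgs r) (M r) = M r := hpush r hr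
  have hgsw := good_swapArgs (r := r) hr
  have hgv := good_vbarArgs (r := r) hr
  set V : ℕ → MFrac r := fun j => msubst (Qfam r j) (M r) with hV
  have hV0 : V 0 = M r := by
    show msubst (Qfam r 0) (M r) = M r
    rw [Qfam_zero hr, msubst_X]
  have hterm : ∀ i ∈ Icc 1 r, msubst (fayArgs r i) (durM M r)
      = toF (if i = r then -(Xn r 0) else sumXn r r - Xn r 0) * V (r - i) := by
    intro i hi
    rw [Finset.mem_Icc] at hi
    have hgf := good_fayArgs hi.1 hi.2
    show msubst (fayArgs r i) (toF (sumXn r r) * M r) = _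
    rw [msubst_mul hgf, msubst_toF hgf, fay_prefactor hi.1 hi.2]
    congr 1
    have hQ : Good (Qfam r (r - i)) :=
      good_comp hgv (good_comp (good_rotFam hr _) hgsw)
    calc msubst (fayArgs r i) (M r)
        = msubst (windowF (Qfam r (r - i)) (r - i + 1)) (M r) := by rw [← matchB hi.1 hi.2]
      _ = msubst (Qfam r (r - i)) (M r) := (msubst_windowF hr hx hQ (r - i + 1)).2
  have hRHS : msubst (vbarArgs r) (∑ j ∈ range r, (circM^[j] (swapM M)) r)
      = ∑ j ∈ range r, V j := by
    rw [msubst_sum hgv]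
    refine Finset.sum_congr rfl fun j _ => ?_
    rw [CS_term hr M j, msubst_msubst hgv (good_comp (good_rotFam hr j) hgsw)]
    rfl
  rw [hRHS]
  show durM M r + ∑ i ∈ Icc 1 r, msubst (fayArgs r i) (durM M r) = _
  rw [Finset.sum_congr rfl hterm]
  have hre : ∑ i ∈ Icc 1 r, toF (if i = r then -(Xn r 0) else sumXn r r - Xn r 0) * V (r - i)
      = ∑ j ∈ range r, toF (if j = 0 then -(Xn r 0) else sumXn r r - Xn r 0) * V j := by
    refine Finset.sum_bij' (fun a _ => r - a) (fun b _ => r - b) ?_ ?_ ?_ ?_ ?_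
    · intro a ha
      rw [Finset.mem_Icc] at ha
      rw [Finset.mem_range]
      omega
    · intro b hb
      rw [Finset.mem_range] at hb
      rw [Finset.mem_Icc]
      omega
    · intro a ha
      rw [Finset.mem_Icc] at ha
      omega
    · intro b hb
      rw [Finset.mem_range] at hb
      omega
    · intro a ha
      rw [Finset.mem_Icc] at ha
      congr 2
      by_cases h : a = r
      · rw [if_pos h, if_pos (by omega)]
      · rw [if_neg h, if_neg (by omega)]
  rw [hre]
  have h0 : (0 : ℕ) ∈ range r := by rw [Finset.mem_range]; omega
  rw [Finset.mul_sum]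
  rw [← Finset.add_sum_erase _ _ h0, ← Finset.add_sum_erase _ _ h0]
  have herase : ∑ j ∈ (range r).erase 0, toF (if j = 0 then -(Xn r 0)
      else sumXn r r - Xn r 0) * V j
      = ∑ j ∈ (range r).erase 0, toF (sumXn r r - Xn r 0) * V j := by
    refine Finset.sum_congr rfl fun j hj => ?_
    rw [Finset.mem_erase] at hj
    rw [if_neg hj.1]
  rw [herase, if_pos rfl]
  show toF (sumXn r r) * M r + (toF (-(Xn r 0)) * V 0 + _) = _
  rw [hV0]
  have ht : toF (sumXn r r - Xn r 0) = toF (sumXn r r) + toF (-(Xn r 0)) := by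
    unfold toF
    rw [← map_add]
    congr 1
    ring
  rw [ht]
  ring

lemma sum_ne (hr2 : 2 ≤ r) : toF (sumXn r r - Xn r 0) ≠ 0 := by
  intro h
  have hp : (sumXn r r - Xn r 0 : MPoly r) = 0 := by
    apply toF_injective r
    rw [h]
    exact (map_zero _).symm
  have := congrArg (aeval (R := ℚ) (fun _ : Fin r => (1 : ℚ))) hp
  rw [map_sub, map_zero] at this
  have h1 : aeval (R := ℚ) (fun _ : Fin r => (1 : ℚ)) (sumXn r r) = (r : ℚ) := by
    unfold sumXn
    rw [map_sum]
    have : ∀ k ∈ range r, aeval (R := ℚ) (fun _ : Fin r => (1 : ℚ)) (Xn r k) = 1 := by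
      intro k hk
      rw [Finset.mem_range] at hk
      rw [Xn_lt hk, aeval_X]
    rw [Finset.sum_congr rfl this, Finset.sum_const, Finset.card_range, nsmul_eq_mul, mul_one]
  have h2 : aeval (R := ℚ) (fun _ : Fin r => (1 : ℚ)) (Xn r 0) = 1 := by
    rw [Xn_lt (show 0 < r by omega), aeval_X]
  rw [h1, h2] at this
  have : (r : ℚ) = 1 := by linarith
  have : r = 1 := by exact_mod_cast this
  omega

lemma equivB (hr2 : 2 ≤ r) (M : Mould) (hpush : PushInvariant M) (c : ℚ) :
    (∑ j ∈ range r, (circM^[j] (swapM M)) r = constF r c)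
      ↔ (Fay (durM M) r = constF r c * toF (sumXn r r - Xn r 0)) := by
  have hr : 1 ≤ r := by omega
  have hgv := good_vbarArgs (r := r) hr
  rw [identityB hr M hpush]
  constructor
  · intro h
    rw [h, msubst_constF hgv]
    ring
  · intro h
    have h2 : msubst (vbarArgs r) (∑ j ∈ range r, (circM^[j] (swapM M)) r)
        = constF r c := by
      apply mul_left_cancel₀ (sum_ne hr2)
      rw [h]
      ring
    apply msubst_injective hgv
    rw [h2, msubst_constF hgv]

end Thm13


/-- **Theorem 1.3.** Let `M ∈ ARI` be alternal and push-invariant with `ΔM` a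
polynomial mould, set `A' := dur M`, and let `C = (c_r)` be a constant mould.
Then the following are equivalent (with the same `C`):
(i) `swap M + C` satisfies the first alternality relation, i.e.
`(swap M)(sh((v_1),(v_2,…,v_r))) = −r·c_r` for all `r ≥ 2`;
(ii) `swap M + C` is circ-neutral, i.e.
`Σ_{i=0}^{r−1} circ^i(swap M) = −r·c_r` for all `r ≥ 2`;
(iii) `ℱ(A')(u_1,…,u_r) = −r·c_r·(u_2+⋯+u_r)` for all `r ≥ 2`. -/
theorem theorem_1_3 (M : Mould) (hM0 : M 0 = 0) (halt : Alternal M)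
    (hpush : PushInvariant M) (hpoly : IsPolynomialMould (deltaM M)) (C : ℕ → ℚ) :
    ((∀ r : ℕ, 2 ≤ r →
          ∑ i ∈ Finset.Icc 1 r, msubst (sh1Args r i) (swapM M r)
            = constF r (-(r : ℚ) * C r)) ↔
        (∀ r : ℕ, 2 ≤ r →
          ∑ i ∈ Finset.range r, (circM^[i] (swapM M)) r
            = constF r (-(r : ℚ) * C r))) ∧
    ((∀ r : ℕ, 2 ≤ r →
          ∑ i ∈ Finset.range r, (circM^[i] (swapM M)) r
            = constF r (-(r : ℚ) * C r)) ↔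
        (∀ r : ℕ, 2 ≤ r →
          Fay (durM M) r = constF r (-(r : ℚ) * C r) * toF (sumXn r r - Xn r 0))) := by
  constructor
  · constructor
    · intro h r hr
      exact (Thm13.equivA hr M hpush (-(r : ℚ) * C r)).mp (h r hr)
    · intro h r hr
      exact (Thm13.equivA hr M hpush (-(r : ℚ) * C r)).mpr (h r hr)
  · constructor
    · intro h r hr
      exact (Thm13.equivB hr M hpush (-(r : ℚ) * C r)).mp (h r hr)
    · intro h r hr
      exact (Thm13.equivB hr M hpush (-(r : ℚ) * C r)).mpr (h r hr)

end
end
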